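/- arXiv:1810.09790 — 4 statements merged into one kernel-verified Lean document; each statement's English description precedes it below -/
import Mathlib

section
/- For s ∈ ℝ^k, α ∈ ℝ_{>0}^k, define the normalized moment μ̃_n(s,α) = Σ_{m ∈ ℕ_0^k, |m|=n} (s^m/m!)(α)_m. Then μ̃_{n-1}(s, α + e_ℓ) = Σ_{h=1}^n s_ℓ^{h-1} μ̃_{n-h}(s, α) for every ℓ ∈ [k] and n ≥ 1. -/
open Finset

lemma poch_shift (x : ℝ) (m : ℕ) :
    (ascPochhammer ℝ m).eval (x + 1) / m.factorial
      = ∑ r ∈ Finset.range (m + 1), (ascPochhammer ℝ r).eval x / r.factorial := by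
  induction m with
  | zero => simp
  | succ m ih =>
    rw [Finset.sum_range_succ, ← ih]
    have h1 : (ascPochhammer ℝ (m + 1)).eval (x + 1)
        = (ascPochhammer ℝ m).eval (x + 1) * (x + 1 + m) := ascPochhammer_succ_eval m (x+1)
    have h2 : (ascPochhammer ℝ (m + 1)).eval x = x * (ascPochhammer ℝ m).eval (x + 1) := by
      rw [ascPochhammer_succ_left]
      simp [Polynomial.eval_comp]
    have h3 : ((m+1).factorial : ℝ) = (m+1) * m.factorial := by
      push_cast [Nat.factorial_succ]; ring
    have h4 : (m.factorial : ℝ) ≠ 0 := Nat.cast_ne_zero.mpr m.factorial_ne_zero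
    have h5 : ((m:ℝ)+1) ≠ 0 := by positivity
    rw [h1, h2, h3]
    field_simp
    ring


/-- The normalized Dirichlet moment
`μ̃_n(s,α) = Σ_{m ∈ ℕ_0^k, |m|=n} (s^m/m!)(α)_m`. -/
noncomputable def tildeMu (k n : ℕ) (s α : Fin k → ℝ) : ℝ :=
  ∑ m ∈ Finset.Nat.antidiagonalTuple k n,
    (∏ i, s i ^ m i) / (∏ i, ((m i).factorial : ℝ)) *
      ∏ i, (ascPochhammer ℝ (m i)).eval (α i)

/-- `μ̃_{n-1}(s, α + e_ℓ) = Σ_{h=1}^n s_ℓ^{h-1} μ̃_{n-h}(s, α)` for every `ℓ ∈ [k]`, `n ≥ 1`. -/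
theorem tildeMu_shift (k n : ℕ) (hn : 1 ≤ n) (s α : Fin k → ℝ) (hα : ∀ i, 0 < α i)
    (ℓ : Fin k) :
    tildeMu k (n - 1) s (fun i => α i + if i = ℓ then 1 else 0) =
      ∑ h ∈ Finset.Icc 1 n, s ℓ ^ (h - 1) * tildeMu k (n - h) s α := by
  classical
  obtain ⟨N, rfl⟩ : ∃ N, n = N + 1 := ⟨n - 1, by omega⟩
  simp only [Nat.add_sub_cancel]
  set f : Fin k → ℕ → ℝ :=
    fun i c => s i ^ c / c.factorial * (ascPochhammer ℝ c).eval (α i) with hf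
  have key_term : ∀ (β : Fin k → ℝ) (m : Fin k → ℕ),
      (∏ i, s i ^ m i) / (∏ i, ((m i).factorial : ℝ)) *
          ∏ i, (ascPochhammer ℝ (m i)).eval (β i)
        = ∏ i, (s i ^ m i / ((m i).factorial : ℝ) * (ascPochhammer ℝ (m i)).eval (β i)) := by
    intro β m
    rw [← Finset.prod_div_distrib, ← Finset.prod_mul_distrib]
  have sum_update : ∀ (m : Fin k → ℕ) (r : ℕ),
      ∑ i, Function.update m ℓ r i = r + ∑ i ∈ Finset.univ.erase ℓ, m i := by
    intro m r
    rw [← Finset.add_sum_erase _ _ (Finset.mem_univ ℓ), Function.update_self]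
    congr 1
    exact Finset.sum_congr rfl fun i hi => Function.update_of_ne (Finset.mem_erase.mp hi).1 _ _
  have sum_split : ∀ (m : Fin k → ℕ),
      ∑ i, m i = m ℓ + ∑ i ∈ Finset.univ.erase ℓ, m i := by
    intro m
    exact (Finset.add_sum_erase _ _ (Finset.mem_univ ℓ)).symm
  -- RHS : Icc → range
  have hRHS : ∑ h ∈ Finset.Icc 1 (N + 1), s ℓ ^ (h - 1) * tildeMu k (N + 1 - h) s α
      = ∑ j ∈ Finset.range (N + 1), s ℓ ^ (N - j) * tildeMu k j s α := by
    refine Finset.sum_nbij' (fun h => N + 1 - h) (fun j => N + 1 - j) ?_ ?_ ?_ ?_ ?_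
    · intro a ha; simp only [Finset.mem_Icc] at ha; simp only [Finset.mem_range]; omega
    · intro a ha; simp only [Finset.mem_range] at ha; simp only [Finset.mem_Icc]; omega
    · intro a ha; simp only [Finset.mem_Icc] at ha
      show N + 1 - (N + 1 - a) = a; omega
    · intro a ha; simp only [Finset.mem_range] at ha
      show N + 1 - (N + 1 - a) = a; omega
    · intro a ha; simp only [Finset.mem_Icc] at ha
      have h1 : a - 1 = N - (N + 1 - a) := by omega
      rw [h1]
  rw [hRHS]
  -- expand LHS
  have hL : tildeMu k N s (fun i => α i + if i = ℓ then 1 else 0)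
      = ∑ m ∈ Finset.Nat.antidiagonalTuple k N, ∑ r ∈ Finset.range (m ℓ + 1),
          s ℓ ^ (m ℓ - r) * (f ℓ r * ∏ i ∈ Finset.univ.erase ℓ, f i (m i)) := by
    rw [tildeMu]
    refine Finset.sum_congr rfl fun m _ => ?_
    rw [key_term]
    rw [← Finset.mul_prod_erase Finset.univ _ (Finset.mem_univ ℓ)]
    have herase : ∏ i ∈ Finset.univ.erase ℓ, (s i ^ m i / ((m i).factorial : ℝ) *
        (ascPochhammer ℝ (m i)).eval (α i + if i = ℓ then 1 else 0))
        = ∏ i ∈ Finset.univ.erase ℓ, f i (m i) := by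
      refine Finset.prod_congr rfl fun i hi => ?_
      rw [Finset.mem_erase] at hi
      simp [hf, hi.1]
    have hfl : s ℓ ^ m ℓ / ((m ℓ).factorial : ℝ) *
        (ascPochhammer ℝ (m ℓ)).eval (α ℓ + if ℓ = ℓ then 1 else 0)
        = ∑ r ∈ Finset.range (m ℓ + 1), s ℓ ^ (m ℓ - r) * f ℓ r := by
      have hif : (if ℓ = ℓ then (1:ℝ) else 0) = 1 := if_pos rfl
      rw [hif, div_mul_eq_mul_div, mul_div_assoc, poch_shift, Finset.mul_sum]
      refine Finset.sum_congr rfl fun r hr => ?_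
      rw [Finset.mem_range] at hr
      have hp : s ℓ ^ m ℓ = s ℓ ^ (m ℓ - r) * s ℓ ^ r := by
        rw [← pow_add]; congr 1; omega
      rw [hp]
      simp only [hf]
      ring
    rw [herase, hfl, Finset.sum_mul]
    refine Finset.sum_congr rfl fun r _ => ?_
    ring
  rw [hL, Finset.sum_sigma']
  -- expand RHS
  have hR : ∀ j, s ℓ ^ (N - j) * tildeMu k j s α
      = ∑ m ∈ Finset.Nat.antidiagonalTuple k j,
          s ℓ ^ (N - j) * (f ℓ (m ℓ) * ∏ i ∈ Finset.univ.erase ℓ, f i (m i)) := by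
    intro j
    rw [tildeMu, Finset.mul_sum]
    refine Finset.sum_congr rfl fun m _ => ?_
    rw [key_term, ← Finset.mul_prod_erase Finset.univ _ (Finset.mem_univ ℓ)]
  simp only [hR]
  rw [Finset.sum_sigma']
  -- the bijection
  refine Finset.sum_nbij' (fun p => ⟨p.2 + (N - p.1 ℓ), Function.update p.1 ℓ p.2⟩)
    (fun q => ⟨Function.update q.2 ℓ (q.2 ℓ + (N - q.1)), q.2 ℓ⟩) ?_ ?_ ?_ ?_ ?_
  · rintro ⟨m, r⟩ hp
    simp only [Finset.mem_sigma, Finset.Nat.mem_antidiagonalTuple, Finset.mem_range] at hp ⊢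
    obtain ⟨hm, hr⟩ := hp
    have h1 := sum_split m
    have h2 : m ℓ ≤ N := by
      rw [← hm]
      exact Finset.single_le_sum (fun i _ => Nat.zero_le _) (Finset.mem_univ ℓ)
    refine ⟨by omega, ?_⟩
    rw [sum_update]
    omega
  · rintro ⟨j, m⟩ hq
    simp only [Finset.mem_sigma, Finset.Nat.mem_antidiagonalTuple, Finset.mem_range] at hq ⊢
    obtain ⟨hj, hm⟩ := hq
    have h1 := sum_split m
    have h2 : m ℓ ≤ j := by
      rw [← hm]
      exact Finset.single_le_sum (fun i _ => Nat.zero_le _) (Finset.mem_univ ℓ)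
    refine ⟨?_, ?_⟩
    · rw [sum_update]; omega
    · rw [Function.update_self]; omega
  · rintro ⟨m, r⟩ hp
    simp only [Finset.mem_sigma, Finset.Nat.mem_antidiagonalTuple, Finset.mem_range] at hp
    obtain ⟨hm, hr⟩ := hp
    have h2 : m ℓ ≤ N := by
      rw [← hm]
      exact Finset.single_le_sum (fun i _ => Nat.zero_le _) (Finset.mem_univ ℓ)
    refine Sigma.ext ?_ (heq_of_eq ?_)
    · simp only [Function.update_self]
      funext i
      by_cases hi : i = ℓ
      · subst hi
        simp only [Function.update_self]
        omega
      · simp only [Function.update_of_ne hi]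
    · simp only [Function.update_self]
  · rintro ⟨j, m⟩ hq
    simp only [Finset.mem_sigma, Finset.Nat.mem_antidiagonalTuple, Finset.mem_range] at hq
    obtain ⟨hj, hm⟩ := hq
    have h2 : m ℓ ≤ j := by
      rw [← hm]
      exact Finset.single_le_sum (fun i _ => Nat.zero_le _) (Finset.mem_univ ℓ)
    refine Sigma.ext ?_ (heq_of_eq ?_)
    · simp only [Function.update_self]
      omega
    · funext i
      by_cases hi : i = ℓ
      · subst hi
        simp only [Function.update_self]
      · simp only [Function.update_of_ne hi]
  · rintro ⟨m, r⟩ hp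
    simp only [Finset.mem_sigma, Finset.Nat.mem_antidiagonalTuple, Finset.mem_range] at hp
    obtain ⟨hm, hr⟩ := hp
    have h2 : m ℓ ≤ N := by
      rw [← hm]
      exact Finset.single_le_sum (fun i _ => Nat.zero_le _) (Finset.mem_univ ℓ)
    have hexp : m ℓ - r = N - (r + (N - m ℓ)) := by omega
    simp only
    rw [hexp, Function.update_self]
    congr 1
    congr 1
    refine Finset.prod_congr rfl fun i hi => ?_
    rw [Function.update_of_ne (Finset.mem_erase.mp hi).1]
end

section
/- For s ∈ ℝ^k, α ∈ ℝ_{>0}^k, j ∈ [k], the cycle-index moment ζ̃_n(s,α) := Z_n(s·α, s^{∘2}·α, ..., s^{∘n}·α) satisfies ∂_{s_j} ζ̃_n(s,α) = α_j Σ_{h=1}^n s_j^{h-1} ζ̃_{n-h}(s,α). -/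
open scoped Classical

/-- The number of cycles of length `i` of a permutation of `Fin n`
(fixed points counted as cycles of length 1). -/
noncomputable def cycleCount (n : ℕ) (π : Equiv.Perm (Fin n)) (i : ℕ) : ℕ :=
  (Finset.univ.filter fun x : Fin n => Function.minimalPeriod (⇑π) x = i).card / i

/-- The cycle index polynomial of the symmetric group `S_n`. -/
noncomputable def cycleIndex (n : ℕ) (t : ℕ → ℝ) : ℝ :=
  (n.factorial : ℝ)⁻¹ *
    ∑ π : Equiv.Perm (Fin n), ∏ i ∈ Finset.Icc 1 n, t i ^ cycleCount n π i

/-- The cycle-index moment `ζ̃_n(s,α) = Z_n(s·α, s^{∘2}·α, ..., s^{∘n}·α)`. -/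
noncomputable def tildeZeta (k n : ℕ) (s α : Fin k → ℝ) : ℝ :=
  cycleIndex n fun j => ∑ i, s i ^ j * α i

set_option linter.unusedSectionVars false

open Function Finset Equiv Equiv.Perm
open Fin.NatCast

set_option linter.unusedSectionVars false

section Helpers

variable {α β : Type*} [Fintype α] [DecidableEq α] [Fintype β] [DecidableEq β]

lemma perm_mem_periodicPts (f : Perm α) (x : α) : x ∈ periodicPts ⇑f :=
  ⟨orderOf f, orderOf_pos f, by
    simp [IsPeriodicPt, IsFixedPt, ← Equiv.Perm.coe_pow, pow_orderOf_eq_one]⟩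

lemma perm_mp_pos (f : Perm α) (x : α) : 0 < minimalPeriod ⇑f x :=
  minimalPeriod_pos_of_mem_periodicPts (perm_mem_periodicPts f x)

lemma perm_mp_le_card (f : Perm α) (x : α) : minimalPeriod ⇑f x ≤ Fintype.card α := by
  have h := Function.iterate_injOn_Iio_minimalPeriod (f := ⇑f) (x := x)
  have : (Finset.range (minimalPeriod ⇑f x)).card ≤ (Finset.univ : Finset α).card := by
    apply Finset.card_le_card_of_injOn (fun k => (⇑f)^[k] x) (fun a _ => Finset.mem_univ _)
    intro a ha b hb hab
    exact h (by simpa using ha) (by simpa using hb) hab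
  simpa using this

lemma perm_mp_congr (f : Perm α) (g : Perm β) (x : α) (y : β)
    (h : ∀ k : ℕ, (f ^ k) x = x ↔ (g ^ k) y = y) :
    minimalPeriod ⇑f x = minimalPeriod ⇑g y := by
  have h' : ∀ k, IsPeriodicPt ⇑f k x ↔ IsPeriodicPt ⇑g k y := fun k => by
    simpa [IsPeriodicPt, IsFixedPt, ← Equiv.Perm.coe_pow] using h k
  apply le_antisymm
  · exact IsPeriodicPt.minimalPeriod_le (perm_mp_pos g y)
      ((h' _).2 (isPeriodicPt_minimalPeriod ⇑g y))
  · exact IsPeriodicPt.minimalPeriod_le (perm_mp_pos f x)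
      ((h' _).1 (isPeriodicPt_minimalPeriod ⇑f x))

/-- count of points with minimal period `i`. -/
noncomputable def pcnt (π : Perm α) (i : ℕ) : ℕ :=
  (Finset.univ.filter fun x => minimalPeriod ⇑π x = i).card

/-- weight of a permutation. -/
noncomputable def pw (t : ℕ → ℝ) (N : ℕ) (π : Perm α) : ℝ :=
  ∏ i ∈ Finset.Icc 1 N, t i ^ (pcnt π i / i)

/-- total weight. -/
noncomputable def pF (t : ℕ → ℝ) (N : ℕ) (α : Type*) [Fintype α] [DecidableEq α] : ℝ :=
  ∑ π : Perm α, pw t N π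

lemma permCongr_pow_apply (e : α ≃ β) (π : Perm α) (k : ℕ) (z : α) :
    ((e.permCongr π) ^ k) (e z) = e ((π ^ k) z) := by
  induction k generalizing z with
  | zero => simp
  | succ k ih =>
    rw [pow_succ', pow_succ']
    simp only [Equiv.Perm.mul_apply, ih z, Equiv.permCongr_apply, Equiv.symm_apply_apply]

lemma perm_mp_permCongr (e : α ≃ β) (π : Perm α) (z : α) :
    minimalPeriod ⇑(e.permCongr π) (e z) = minimalPeriod ⇑π z :=
  perm_mp_congr _ π (e z) z fun k => by
    rw [permCongr_pow_apply]; exact Equiv.apply_eq_iff_eq e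

lemma pcnt_congr (e : α ≃ β) (π : Perm α) (i : ℕ) :
    pcnt (e.permCongr π) i = pcnt π i := by
  unfold pcnt
  rw [eq_comm]
  apply Finset.card_bij (fun x _ => e x)
  · intro a ha
    simp only [Finset.mem_filter, Finset.mem_univ, true_and] at ha ⊢
    rw [perm_mp_permCongr]; exact ha
  · intro a _ b _ hab; exact e.injective hab
  · intro y hy
    simp only [Finset.mem_filter, Finset.mem_univ, true_and] at hy
    refine ⟨e.symm y, ?_, by simp⟩
    simp only [Finset.mem_filter, Finset.mem_univ, true_and]
    rw [← perm_mp_permCongr e π (e.symm y)]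
    simpa using hy

lemma pw_congr (e : α ≃ β) (t : ℕ → ℝ) (N : ℕ) (π : Perm α) :
    pw t N (e.permCongr π) = pw t N π := by
  unfold pw
  exact Finset.prod_congr rfl fun i _ => by rw [pcnt_congr]

lemma pF_congr (e : α ≃ β) (t : ℕ → ℝ) (N : ℕ) : pF t N α = pF t N β := by
  unfold pF
  exact Fintype.sum_equiv e.permCongr _ _ fun π => (pw_congr e t N π).symm

lemma pcnt_eq_zero (π : Perm α) {i : ℕ} (hi : Fintype.card α < i) : pcnt π i = 0 := by
  unfold pcnt
  rw [Finset.card_eq_zero, Finset.filter_eq_empty_iff]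
  intro x _ h
  exact absurd (h ▸ perm_mp_le_card π x) (by omega)

lemma pw_eq_of_le (t : ℕ → ℝ) {N N' : ℕ} (h : Fintype.card α ≤ N) (h' : N ≤ N') (π : Perm α) :
    pw t N' π = pw t N π := by
  unfold pw
  rw [eq_comm]
  apply Finset.prod_subset (Finset.Icc_subset_Icc_right h')
  intro i hi hni
  simp only [Finset.mem_Icc] at hi hni
  rw [pcnt_eq_zero π (by omega), Nat.zero_div, pow_zero]

end Helpers

section Bld

variable {n μ : ℕ}

/-- Build a permutation of `Fin (n+1)` from a cycle (given by an injective tuple) and a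
permutation of the complement. -/
noncomputable def bld (f : Fin (μ+1) → Fin (n+1)) (τ : Perm {x // x ∉ Set.range f}) :
    Perm (Fin (n+1)) :=
  (List.ofFn f).formPerm * Equiv.Perm.ofSubtype τ

variable (f : Fin (μ+1) → Fin (n+1)) (τ : Perm {x // x ∉ Set.range f})

lemma fin_add_one_val (i : Fin (μ+1)) : ((i + 1 : Fin (μ+1)) : ℕ) = ((i : ℕ) + 1) % (μ+1) := by
  rw [Fin.val_add, Fin.val_one']
  conv_rhs => rw [Nat.add_mod]
  rw [Nat.mod_eq_of_lt i.isLt]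

lemma bld_apply_mem (hf : Function.Injective f) (i : Fin (μ+1)) :
    bld f τ (f i) = f (i + 1) := by
  unfold bld
  rw [Equiv.Perm.mul_apply, Equiv.Perm.ofSubtype_apply_of_not_mem τ (by simp)]
  have hnd : (List.ofFn f).Nodup := List.nodup_ofFn.mpr hf
  have h1 : (List.ofFn f)[(i : ℕ)]'(by simp [i.isLt]) = f i := by
    rw [List.getElem_ofFn]
  rw [← h1, List.formPerm_apply_getElem _ hnd]
  rw [List.getElem_ofFn]
  congr 1
  exact (Fin.ext (by rw [fin_add_one_val]; simp)).symm

lemma bld_apply_not_mem (x : Fin (n+1)) (hx : x ∉ Set.range f) :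
    bld f τ x = ((τ ⟨x, hx⟩ : {x // x ∉ Set.range f}) : Fin (n+1)) := by
  unfold bld
  rw [Equiv.Perm.mul_apply, Equiv.Perm.ofSubtype_apply_of_mem τ hx]
  exact List.formPerm_apply_of_notMem
    (fun hmem => (τ ⟨x, hx⟩).2 (List.mem_ofFn.1 hmem))

lemma bld_pow_mem (hf : Function.Injective f) (k : ℕ) (i : Fin (μ+1)) :
    ((bld f τ) ^ k) (f i) = f (i + (k : Fin (μ+1))) := by
  induction k generalizing i with
  | zero => simp
  | succ k ih =>
    rw [pow_succ, Equiv.Perm.mul_apply, bld_apply_mem f τ hf, ih (i + 1)]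
    congr 1
    push_cast
    abel

lemma bld_pow_not_mem (k : ℕ) (x : Fin (n+1)) (hx : x ∉ Set.range f) :
    ((bld f τ) ^ k) x = (((τ ^ k) ⟨x, hx⟩ : {x // x ∉ Set.range f}) : Fin (n+1)) := by
  induction k generalizing x hx with
  | zero => simp
  | succ k ih =>
    rw [pow_succ, Equiv.Perm.mul_apply, bld_apply_not_mem f τ x hx,
      ih _ (τ ⟨x, hx⟩).2]
    rw [pow_succ, Equiv.Perm.mul_apply]

lemma bld_mp_mem (hf : Function.Injective f) (i : Fin (μ+1)) :
    minimalPeriod ⇑(bld f τ) (f i) = μ + 1 := by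
  apply le_antisymm
  · apply IsPeriodicPt.minimalPeriod_le (Nat.succ_pos μ)
    show IsPeriodicPt _ _ _
    rw [IsPeriodicPt, IsFixedPt, ← Equiv.Perm.coe_pow, bld_pow_mem f τ hf]
    simp
  · have hpos := perm_mp_pos (bld f τ) (f i)
    have hper : ((bld f τ) ^ (minimalPeriod ⇑(bld f τ) (f i))) (f i) = f i := by
      have h2 := iterate_minimalPeriod (f := ⇑(bld f τ)) (x := f i)
      rwa [← Equiv.Perm.coe_pow] at h2
    rw [bld_pow_mem f τ hf] at hper
    have : ((minimalPeriod ⇑(bld f τ) (f i) : ℕ) : Fin (μ+1)) = 0 :=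
      add_eq_left.mp (hf hper)
    have hdvd : (μ + 1) ∣ minimalPeriod ⇑(bld f τ) (f i) := by
      rwa [Fin.natCast_eq_zero] at this
    exact Nat.le_of_dvd hpos hdvd

lemma bld_mp_not_mem (x : Fin (n+1)) (hx : x ∉ Set.range f) :
    minimalPeriod ⇑(bld f τ) x = minimalPeriod ⇑τ ⟨x, hx⟩ := by
  apply perm_mp_congr
  intro k
  rw [bld_pow_not_mem f τ k x hx]
  constructor
  · intro h; exact Subtype.ext h
  · intro h; rw [h]

end Bld

section Dec

variable {n μ : ℕ}

/-- The tuple of iterates of `0` under a permutation. -/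
noncomputable def dtup (μ : ℕ) (π : Perm (Fin (n+1))) : Fin (μ+1) → Fin (n+1) :=
  fun i => (π ^ (i : ℕ)) 0

variable (π : Perm (Fin (n+1)))

lemma dtup_inj (hm : minimalPeriod ⇑π 0 = μ + 1) : Function.Injective (dtup μ π) := by
  intro a b hab
  have h := Function.iterate_injOn_Iio_minimalPeriod (f := ⇑π) (x := 0)
  have ha : (a : ℕ) ∈ Set.Iio (minimalPeriod ⇑π 0) := by rw [hm]; exact a.isLt
  have hb : (b : ℕ) ∈ Set.Iio (minimalPeriod ⇑π 0) := by rw [hm]; exact b.isLt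
  exact Fin.ext (h ha hb (by simpa [dtup, ← Equiv.Perm.coe_pow] using hab))

lemma dtup_zero : dtup μ π 0 = 0 := by simp [dtup]

lemma pow_mem_range_dtup (hm : minimalPeriod ⇑π 0 = μ + 1) (k : ℕ) :
    (π ^ k) 0 ∈ Set.range (dtup μ π) := by
  refine ⟨⟨k % (μ+1), Nat.mod_lt _ (Nat.succ_pos μ)⟩, ?_⟩
  show (π ^ (k % (μ+1))) 0 = (π ^ k) 0
  have h := Function.iterate_mod_minimalPeriod_eq (f := ⇑π) (x := 0) (n := k)
  rw [hm] at h
  simpa [← Equiv.Perm.coe_pow] using h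

lemma mem_range_dtup_iff (hm : minimalPeriod ⇑π 0 = μ + 1) (x : Fin (n+1)) :
    x ∈ Set.range (dtup μ π) ↔ ∃ k : ℕ, (π ^ k) 0 = x := by
  constructor
  · rintro ⟨i, rfl⟩; exact ⟨(i : ℕ), rfl⟩
  · rintro ⟨k, rfl⟩; exact pow_mem_range_dtup π hm k

lemma dec_mem_iff (hm : minimalPeriod ⇑π 0 = μ + 1) (x : Fin (n+1)) :
    (x ∉ Set.range (dtup μ π)) ↔ (π x ∉ Set.range (dtup μ π)) := by
  have hper : (π ^ (μ+1)) 0 = 0 := by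
    have h := Function.iterate_minimalPeriod (f := ⇑π) (x := 0)
    rw [hm] at h
    simpa [← Equiv.Perm.coe_pow, pow_succ, Equiv.Perm.mul_apply] using h
  apply not_congr
  rw [mem_range_dtup_iff π hm, mem_range_dtup_iff π hm]
  constructor
  · rintro ⟨k, rfl⟩
    exact ⟨k + 1, by rw [pow_succ', Equiv.Perm.mul_apply]⟩
  · rintro ⟨j, hj⟩
    refine ⟨j + μ, π.injective ?_⟩
    rw [← hj]
    have : (π ^ (j + μ + 1)) 0 = (π ^ j) 0 := by
      rw [show j + μ + 1 = j + (μ + 1) by ring, pow_add, Equiv.Perm.mul_apply, hper]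
    rw [← this, ← Equiv.Perm.mul_apply, ← pow_succ']

/-- The permutation of the complement of the orbit of `0`. -/
noncomputable def dperm (hm : minimalPeriod ⇑π 0 = μ + 1) :
    Perm {x // x ∉ Set.range (dtup μ π)} :=
  π.subtypePerm (fun x => (dec_mem_iff π hm x).symm)

lemma bld_dec (hm : minimalPeriod ⇑π 0 = μ + 1) : bld (dtup μ π) (dperm π hm) = π := by
  apply Equiv.ext
  intro x
  by_cases hx : x ∈ Set.range (dtup μ π)
  · obtain ⟨i, rfl⟩ := hx
    rw [bld_apply_mem _ _ (dtup_inj π hm)]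
    show (π ^ ((i + 1 : Fin (μ+1)) : ℕ)) 0 = π ((π ^ (i : ℕ)) 0)
    rw [fin_add_one_val]
    have h := Function.iterate_mod_minimalPeriod_eq (f := ⇑π) (x := 0) (n := (i : ℕ) + 1)
    rw [hm] at h
    have h2 : (π ^ (((i:ℕ) + 1) % (μ+1))) 0 = (π ^ ((i:ℕ) + 1)) 0 := by
      simpa [← Equiv.Perm.coe_pow, pow_succ, Equiv.Perm.mul_apply] using h
    rw [h2, pow_succ', Equiv.Perm.mul_apply]
  · rw [bld_apply_not_mem _ _ x hx]
    rfl

lemma bld_mp_zero (f : Fin (μ+1) → Fin (n+1)) (τ : Perm {x // x ∉ Set.range f})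
    (hf : Function.Injective f) (h0 : f 0 = 0) :
    minimalPeriod ⇑(bld f τ) 0 = μ + 1 := by
  conv_lhs => rw [← h0]
  exact bld_mp_mem f τ hf 0

lemma dtup_bld (f : Fin (μ+1) → Fin (n+1)) (τ : Perm {x // x ∉ Set.range f})
    (hf : Function.Injective f) (h0 : f 0 = 0) :
    dtup μ (bld f τ) = f := by
  funext i
  show ((bld f τ) ^ (i : ℕ)) 0 = f i
  rw [← h0, bld_pow_mem f τ hf, zero_add, Fin.cast_val_eq_self]

lemma sigma_ext_perm {f g : Fin (μ+1) → Fin (n+1)} (hfg : f = g)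
    {τ : Perm {x // x ∉ Set.range f}} {τ' : Perm {x // x ∉ Set.range g}}
    (h : ∀ x (hx : x ∉ Set.range f) (hx' : x ∉ Set.range g),
      ((τ ⟨x, hx⟩ : {x // x ∉ Set.range f}) : Fin (n+1)) =
      ((τ' ⟨x, hx'⟩ : {x // x ∉ Set.range g}) : Fin (n+1))) :
    (⟨f, τ⟩ : Σ f : Fin (μ+1) → Fin (n+1), Perm {x // x ∉ Set.range f}) = ⟨g, τ'⟩ := by
  subst hfg
  congr 1
  exact Equiv.ext fun x => Subtype.ext (h x.1 x.2 x.2)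

lemma dec_bld_sigma (f : Fin (μ+1) → Fin (n+1)) (τ : Perm {x // x ∉ Set.range f})
    (hf : Function.Injective f) (h0 : f 0 = 0) :
    (⟨dtup μ (bld f τ), dperm (bld f τ) (bld_mp_zero f τ hf h0)⟩ :
      Σ g : Fin (μ+1) → Fin (n+1), Perm {x // x ∉ Set.range g}) = ⟨f, τ⟩ := by
  apply sigma_ext_perm (dtup_bld f τ hf h0)
  intro x hx hx'
  show (bld f τ) x = _
  rw [bld_apply_not_mem f τ x hx']

end Dec

section Weight

variable {n μ : ℕ} (f : Fin (μ+1) → Fin (n+1)) (τ : Perm {x // x ∉ Set.range f})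

lemma card_filter_range (hf : Function.Injective f) :
    (Finset.univ.filter fun x : Fin (n+1) => x ∈ Set.range f).card = μ + 1 := by
  have h : ((Finset.univ : Finset (Fin (μ+1)))).card =
      (Finset.univ.filter fun x : Fin (n+1) => x ∈ Set.range f).card := by
    apply Finset.card_bij (fun j _ => f j)
    · intro a _; simp
    · intro a _ b _ hab; exact hf hab
    · intro y hy
      simp only [Finset.mem_filter, Finset.mem_univ, true_and] at hy
      obtain ⟨j, rfl⟩ := hy
      exact ⟨j, Finset.mem_univ _, rfl⟩
  rw [← h, Finset.card_univ, Fintype.card_fin]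

lemma card_compl_range (hf : Function.Injective f) :
    Fintype.card {x : Fin (n+1) // x ∉ Set.range f} = n - μ := by
  rw [Fintype.card_subtype]
  have h2 := Finset.card_filter_add_card_filter_not
    (s := (Finset.univ : Finset (Fin (n+1)))) (p := fun x => x ∈ Set.range f)
  rw [card_filter_range f hf, Finset.card_univ, Fintype.card_fin] at h2
  omega

lemma pcnt_bld (hf : Function.Injective f) (i : ℕ) :
    pcnt (bld f τ) i = (if i = μ + 1 then μ + 1 else 0) + pcnt τ i := by
  unfold pcnt
  rw [← Finset.card_filter_add_card_filter_not
    (s := Finset.univ.filter fun x => minimalPeriod ⇑(bld f τ) x = i)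
    (p := fun x => x ∈ Set.range f), Finset.filter_filter, Finset.filter_filter]
  congr 1
  · -- points on the cycle
    by_cases hi : i = μ + 1
    · subst hi
      rw [if_pos rfl]
      have : (Finset.univ.filter fun x : Fin (n+1) =>
          minimalPeriod ⇑(bld f τ) x = μ + 1 ∧ x ∈ Set.range f) =
          Finset.univ.filter fun x : Fin (n+1) => x ∈ Set.range f := by
        apply Finset.filter_congr
        intro x _
        constructor
        · intro h; exact h.2
        · rintro hx
          exact ⟨by obtain ⟨j, rfl⟩ := hx; exact bld_mp_mem f τ hf j, hx⟩
      rw [this, card_filter_range f hf]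
    · rw [if_neg hi]
      rw [Finset.card_eq_zero, Finset.filter_eq_empty_iff]
      rintro x _ ⟨hmp, hx⟩
      obtain ⟨j, rfl⟩ := hx
      rw [bld_mp_mem f τ hf j] at hmp
      exact hi hmp.symm
  · -- points off the cycle
    apply Finset.card_bij (fun (x : Fin (n+1)) hx =>
      (⟨x, (Finset.mem_filter.1 hx).2.2⟩ : {x // x ∉ Set.range f}))
    · intro a ha
      simp only [Finset.mem_filter, Finset.mem_univ, true_and] at ha ⊢
      rw [← bld_mp_not_mem f τ a ha.2]
      exact ha.1
    · intro a ha b hb hab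
      exact congrArg Subtype.val hab
    · intro y hy
      simp only [Finset.mem_filter, Finset.mem_univ, true_and] at hy
      refine ⟨y.1, Finset.mem_filter.2 ⟨Finset.mem_univ _, ?_, y.2⟩, by simp⟩
      rw [bld_mp_not_mem f τ y.1 y.2]
      simpa using hy

lemma pw_bld (t : ℕ → ℝ) (hf : Function.Injective f) (hμn : μ ≤ n) :
    pw t (n+1) (bld f τ) = t (μ + 1) * pw t (n - μ) τ := by
  unfold pw
  have hexp : ∀ i ∈ Finset.Icc 1 (n+1),
      t i ^ (pcnt (bld f τ) i / i) =
      t i ^ (pcnt τ i / i) * t i ^ (if i = μ + 1 then 1 else 0) := by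
    intro i hi
    rw [← pow_add, pcnt_bld f τ hf i]
    by_cases h : i = μ + 1
    · subst h
      congr 1
      rw [if_pos rfl, if_pos rfl, Nat.add_comm, Nat.add_div_right _ (Nat.succ_pos μ)]
    · simp [h]
  rw [Finset.prod_congr rfl hexp, Finset.prod_mul_distrib]
  have h2 : (∏ i ∈ Finset.Icc 1 (n+1), t i ^ (if i = μ + 1 then 1 else 0)) = t (μ + 1) := by
    have : ∀ i, t i ^ (if i = μ + 1 then 1 else 0) = (if i = μ + 1 then t i else 1) := by
      intro i; split <;> simp
    simp only [this]
    rw [Finset.prod_ite_eq' (Finset.Icc 1 (n+1)) (μ+1) t]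
    rw [if_pos (by simp [Finset.mem_Icc]; omega)]
  have h1 : (∏ i ∈ Finset.Icc 1 (n+1), t i ^ (pcnt τ i / i)) =
      ∏ i ∈ Finset.Icc 1 (n - μ), t i ^ (pcnt τ i / i) := by
    rw [eq_comm]
    apply Finset.prod_subset (Finset.Icc_subset_Icc_right (by omega))
    intro i hi hni
    simp only [Finset.mem_Icc] at hi hni
    rw [pcnt_eq_zero τ (by rw [card_compl_range f hf]; omega), Nat.zero_div, pow_zero]
  rw [h1, h2, mul_comm]

end Weight

section Count

lemma card_inj_tuples (n μ : ℕ) :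
    ((Finset.univ : Finset (Fin (μ+1) → Fin (n+1))).filter
      fun f => Function.Injective f ∧ f 0 = 0).card = n.descFactorial μ := by
  rw [← Fintype.card_subtype]
  have e : {f : Fin (μ+1) → Fin (n+1) // Function.Injective f ∧ f 0 = 0} ≃
      (Fin μ ↪ {x : Fin (n+1) // x ≠ 0}) := by
    refine ⟨fun F => ⟨fun i => ⟨F.1 i.succ, fun h => Fin.succ_ne_zero i
        (F.2.1 (h.trans F.2.2.symm))⟩, fun a b hab => Fin.succ_injective _
        (F.2.1 (congrArg Subtype.val hab))⟩,
      fun g => ⟨fun i => if h : i = 0 then 0 else (g (i.pred h)).1, ?_, dif_pos rfl⟩,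
      ?_, ?_⟩
    · intro a b hab
      have hab' : (if h : a = 0 then (0 : Fin (n+1)) else (g (a.pred h)).1) =
          (if h : b = 0 then (0 : Fin (n+1)) else (g (b.pred h)).1) := hab
      by_cases ha : a = 0 <;> by_cases hb : b = 0
      · rw [ha, hb]
      · rw [dif_pos ha, dif_neg hb] at hab'
        exact absurd hab'.symm (g (b.pred hb)).2
      · rw [dif_neg ha, dif_pos hb] at hab'
        exact absurd hab' (g (a.pred ha)).2
      · rw [dif_neg ha, dif_neg hb] at hab'
        have := g.injective (Subtype.ext hab')
        rwa [Fin.pred_inj] at this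
    · intro F
      apply Subtype.ext
      funext i
      dsimp only
      by_cases h : i = 0
      · subst h
        rw [dif_pos rfl]
        exact F.2.2.symm
      · rw [dif_neg h]
        show F.1 ((i.pred h).succ) = F.1 i
        rw [Fin.succ_pred]
    · intro g
      ext i
      simp only [Function.Embedding.coeFn_mk, dif_neg (Fin.succ_ne_zero i), Fin.pred_succ]
  rw [Fintype.card_congr e, Fintype.card_embedding_eq, Fintype.card_fin]
  congr 1
  have h := Fintype.card_subtype_compl (p := fun x : Fin (n+1) => x = 0)
  rw [Fintype.card_subtype_eq, Fintype.card_fin] at h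
  simpa using h

end Count

section Rec

lemma pF_succ (n : ℕ) (t : ℕ → ℝ) :
    pF t (n+1) (Fin (n+1)) =
      ∑ m ∈ Finset.Icc 1 (n+1),
        (n.descFactorial (m-1) : ℝ) * t m * pF t (n+1-m) (Fin (n+1-m)) := by
  have hmap : ∀ π ∈ (Finset.univ : Finset (Perm (Fin (n+1)))),
      minimalPeriod ⇑π 0 ∈ Finset.Icc 1 (n+1) := by
    intro π _
    rw [Finset.mem_Icc]
    refine ⟨perm_mp_pos π 0, ?_⟩
    have := perm_mp_le_card π 0
    rwa [Fintype.card_fin] at this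
  rw [pF, ← Finset.sum_fiberwise_of_maps_to hmap]
  apply Finset.sum_congr rfl
  intro m hm
  rw [Finset.mem_Icc] at hm
  obtain ⟨μ, rfl⟩ : ∃ μ, m = μ + 1 := ⟨m - 1, by omega⟩
  have hμn : μ ≤ n := by omega
  have hsub : n + 1 - (μ + 1) = n - μ := by omega
  have hsub2 : μ + 1 - 1 = μ := by omega
  rw [hsub, hsub2]
  set D := (Finset.univ : Finset (Fin (μ+1) → Fin (n+1))).filter
    (fun f => Function.Injective f ∧ f 0 = 0) with hD
  have step1 : ∑ π ∈ Finset.univ.filter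
        (fun π : Perm (Fin (n+1)) => minimalPeriod ⇑π 0 = μ + 1), pw t (n+1) π =
      ∑ q ∈ D.sigma (fun f => (Finset.univ : Finset (Perm {x // x ∉ Set.range f}))),
        t (μ+1) * pw t (n - μ) q.2 := by
    refine Finset.sum_bij'
      (fun π hπ => (⟨dtup μ π, dperm π (by simpa using hπ)⟩ :
        Σ g : Fin (μ+1) → Fin (n+1), Perm {x // x ∉ Set.range g}))
      (fun q hq => bld q.1 q.2) ?_ ?_ ?_ ?_ ?_
    · intro π hπ
      simp only [Finset.mem_filter, Finset.mem_univ, true_and] at hπ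
      rw [Finset.mem_sigma]
      exact ⟨Finset.mem_filter.2 ⟨Finset.mem_univ _, dtup_inj π hπ, dtup_zero π⟩,
        Finset.mem_univ _⟩
    · intro q hq
      rw [Finset.mem_sigma] at hq
      have hf := (Finset.mem_filter.1 hq.1).2
      simp only [Finset.mem_filter, Finset.mem_univ, true_and]
      exact bld_mp_zero q.1 q.2 hf.1 hf.2
    · intro π hπ
      simp only [Finset.mem_filter, Finset.mem_univ, true_and] at hπ
      exact bld_dec π hπ
    · intro q hq
      rw [Finset.mem_sigma] at hq
      have hf := (Finset.mem_filter.1 hq.1).2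
      exact dec_bld_sigma q.1 q.2 hf.1 hf.2
    · intro π hπ
      simp only [Finset.mem_filter, Finset.mem_univ, true_and] at hπ
      conv_lhs => rw [← bld_dec π hπ]
      exact pw_bld _ _ t (dtup_inj π hπ) hμn
  rw [step1, Finset.sum_sigma]
  have step2 : ∀ f ∈ D,
      (∑ τ : Perm {x // x ∉ Set.range f}, t (μ+1) * pw t (n - μ) τ) =
      t (μ+1) * pF t (n - μ) (Fin (n - μ)) := by
    intro f hf
    have hinj := (Finset.mem_filter.1 hf).2.1
    rw [← Finset.mul_sum]
    congr 1
    have e : {x : Fin (n+1) // x ∉ Set.range f} ≃ Fin (n - μ) :=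
      Fintype.equivFinOfCardEq (card_compl_range f hinj)
    have : (∑ τ : Perm {x // x ∉ Set.range f}, pw t (n - μ) τ) =
        pF t (n - μ) {x : Fin (n+1) // x ∉ Set.range f} := rfl
    rw [this, pF_congr e]
  rw [Finset.sum_congr rfl step2, Finset.sum_const]
  rw [hD, card_inj_tuples n μ]
  rw [nsmul_eq_mul]
  ring

lemma cycleIndex_pF (N : ℕ) (t : ℕ → ℝ) :
    cycleIndex N t = ((N.factorial : ℝ))⁻¹ * pF t N (Fin N) := rfl

lemma rec_cycleIndex (n : ℕ) (t : ℕ → ℝ) :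
    (n : ℝ) * cycleIndex n t = ∑ m ∈ Finset.Icc 1 n, t m * cycleIndex (n - m) t := by
  cases n with
  | zero => simp
  | succ n =>
    rw [cycleIndex_pF, pF_succ, Finset.mul_sum, Finset.mul_sum]
    apply Finset.sum_congr rfl
    intro m hm
    rw [Finset.mem_Icc] at hm
    rw [cycleIndex_pF]
    have hkey : ((n+1).factorial : ℝ) =
        (n+1 : ℝ) * (((n+1-m).factorial : ℝ) * (n.descFactorial (m-1) : ℝ)) := by
      have h1 : (n + 1 - m) = n - (m - 1) := by omega
      have h2 : (n - (m-1)).factorial * n.descFactorial (m-1) = n.factorial :=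
        Nat.factorial_mul_descFactorial (by omega)
      rw [Nat.factorial_succ]
      push_cast [← h2, h1]
      ring
    have hne1 : ((n+1).factorial : ℝ) ≠ 0 := Nat.cast_ne_zero.2 (Nat.factorial_ne_zero _)
    have hne2 : ((n+1-m).factorial : ℝ) ≠ 0 := Nat.cast_ne_zero.2 (Nat.factorial_ne_zero _)
    have hne3 : (n.descFactorial (m-1) : ℝ) ≠ 0 := by
      rw [Nat.cast_ne_zero]
      intro h
      rw [Nat.descFactorial_eq_zero_iff_lt] at h
      omega
    field_simp
    rw [hkey]
    push_cast; ring

end Rec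

section Analytic

lemma cycleIndex_zero (t : ℕ → ℝ) : cycleIndex 0 t = 1 := by
  unfold cycleIndex
  simp

lemma hasDerivAt_tildeZeta (k : ℕ) (s α : Fin k → ℝ) (j : Fin k) :
    ∀ (n : ℕ) (x : ℝ), HasDerivAt (fun y => tildeZeta k n (Function.update s j y) α)
      (α j * ∑ h ∈ Finset.Icc 1 n,
        x ^ (h - 1) * tildeZeta k (n - h) (Function.update s j x) α) x := by
  intro n
  induction n using Nat.strong_induction_on with
  | _ n ih =>
  intro x
  cases n with
  | zero =>
    have hfun : (fun y => tildeZeta k 0 (Function.update s j y) α) = fun _ => (1:ℝ) := by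
      funext y
      exact cycleIndex_zero _
    rw [hfun]
    simpa using hasDerivAt_const x (1:ℝ)
  | succ n =>
    have hne : ((n:ℝ) + 1) ≠ 0 := by positivity
    have hfun : (fun y => tildeZeta k (n+1) (Function.update s j y) α) =
        (fun y => ((n:ℝ) + 1)⁻¹ * ∑ m ∈ Finset.Icc 1 (n+1),
          (∑ i, (Function.update s j y i) ^ m * α i) *
            tildeZeta k (n+1-m) (Function.update s j y) α) := by
      funext y
      have h := rec_cycleIndex (n+1) (fun i => ∑ l, (Function.update s j y l) ^ i * α l)
      push_cast at h
      show tildeZeta k (n+1) (Function.update s j y) α = _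
      unfold tildeZeta
      rw [← h, inv_mul_cancel_left₀ hne]
    rw [hfun]
    -- derivative of each T_m
    have hT : ∀ m : ℕ, HasDerivAt (fun y => ∑ i, (Function.update s j y i) ^ m * α i)
        ((m : ℝ) * x ^ (m-1) * α j) x := by
      intro m
      have h1 : HasDerivAt (fun y => ∑ i, (Function.update s j y i) ^ m * α i)
          (∑ i : Fin k, (if i = j then (m:ℝ) * x ^ (m-1) * α j else 0)) x := by
        apply HasDerivAt.fun_sum
        intro i _
        by_cases hij : i = j
        · rw [if_pos hij]
          have hfe : (fun y => (Function.update s j y i) ^ m * α i) =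
              fun y => y ^ m * α i := by
            funext y
            rw [hij, Function.update_self]
          rw [hfe, hij]
          exact (hasDerivAt_pow m x).mul_const (α j)
        · rw [if_neg hij]
          have hfe : (fun y => (Function.update s j y i) ^ m * α i) =
              fun _ => (s i) ^ m * α i := by
            funext y
            rw [Function.update_of_ne hij]
          rw [hfe]
          exact hasDerivAt_const x _
      simpa using h1
    -- derivative of the sum
    have hsum : HasDerivAt (fun y => ∑ m ∈ Finset.Icc 1 (n+1),
        (∑ i, (Function.update s j y i) ^ m * α i) *
          tildeZeta k (n+1-m) (Function.update s j y) α)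
        (∑ m ∈ Finset.Icc 1 (n+1),
          (((m:ℝ) * x ^ (m-1) * α j) * tildeZeta k (n+1-m) (Function.update s j x) α +
           (∑ i, (Function.update s j x i) ^ m * α i) *
             (α j * ∑ h ∈ Finset.Icc 1 (n+1-m),
               x ^ (h-1) * tildeZeta k (n+1-m-h) (Function.update s j x) α))) x := by
      apply HasDerivAt.fun_sum
      intro m hm
      rw [Finset.mem_Icc] at hm
      exact (hT m).mul (ih (n+1-m) (by omega) x)
    have hd := hsum.const_mul (((n:ℝ) + 1)⁻¹)
    refine hd.congr_deriv (Eq.symm ?_)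
    -- value equality
    rw [eq_comm, inv_mul_eq_iff_eq_mul₀ hne]
    rw [Finset.sum_add_distrib]
    have hB : ∑ m ∈ Finset.Icc 1 (n+1),
        (∑ i, (Function.update s j x i) ^ m * α i) *
          (α j * ∑ h ∈ Finset.Icc 1 (n+1-m),
            x ^ (h-1) * tildeZeta k (n+1-m-h) (Function.update s j x) α) =
        α j * ∑ h ∈ Finset.Icc 1 (n+1),
          x ^ (h-1) * (((n+1-h : ℕ) : ℝ) *
            tildeZeta k (n+1-h) (Function.update s j x) α) := by
      have e1 : ∀ m ∈ Finset.Icc 1 (n+1),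
          (∑ i, (Function.update s j x i) ^ m * α i) *
            (α j * ∑ h ∈ Finset.Icc 1 (n+1-m),
              x ^ (h-1) * tildeZeta k (n+1-m-h) (Function.update s j x) α) =
          α j * ∑ h ∈ Finset.Icc 1 (n+1-m),
            (∑ i, (Function.update s j x i) ^ m * α i) *
              (x ^ (h-1) * tildeZeta k (n+1-m-h) (Function.update s j x) α) := by
        intro m _
        rw [Finset.mul_sum, Finset.mul_sum, Finset.mul_sum]
        apply Finset.sum_congr rfl
        intro h _
        ring
      rw [Finset.sum_congr rfl e1, ← Finset.mul_sum]
      congr 1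
      rw [Finset.sum_comm' (s := Finset.Icc 1 (n+1)) (t := fun m => Finset.Icc 1 (n+1-m))
        (t' := Finset.Icc 1 (n+1)) (s' := fun h => Finset.Icc 1 (n+1-h))
        (by intro m h; simp only [Finset.mem_Icc]; omega)]
      apply Finset.sum_congr rfl
      intro h hh
      rw [Finset.mem_Icc] at hh
      have e2 : ∀ m ∈ Finset.Icc 1 (n+1-h),
          (∑ i, (Function.update s j x i) ^ m * α i) *
            (x ^ (h-1) * tildeZeta k (n+1-m-h) (Function.update s j x) α) =
          x ^ (h-1) * ((∑ i, (Function.update s j x i) ^ m * α i) *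
            tildeZeta k (n+1-h-m) (Function.update s j x) α) := by
        intro m hm
        rw [Finset.mem_Icc] at hm
        have : n+1-m-h = n+1-h-m := by omega
        rw [this]
        ring
      rw [Finset.sum_congr rfl e2, ← Finset.mul_sum]
      congr 1
      have hrec := rec_cycleIndex (n+1-h) (fun i => ∑ l, (Function.update s j x l) ^ i * α l)
      exact hrec.symm
    rw [hB]
    have hA : ∑ m ∈ Finset.Icc 1 (n+1),
        ((m:ℝ) * x ^ (m-1) * α j) * tildeZeta k (n+1-m) (Function.update s j x) α =
        α j * ∑ h ∈ Finset.Icc 1 (n+1),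
          x ^ (h-1) * ((h : ℝ) * tildeZeta k (n+1-h) (Function.update s j x) α) := by
      rw [Finset.mul_sum]
      apply Finset.sum_congr rfl
      intro m _
      ring
    rw [hA, ← mul_add, ← Finset.sum_add_distrib]
    conv_rhs => rw [mul_left_comm, Finset.mul_sum]
    congr 1
    apply Finset.sum_congr rfl
    intro h hh
    rw [Finset.mem_Icc] at hh
    have hcast : ((h : ℝ) + ((n+1-h : ℕ) : ℝ)) = (n : ℝ) + 1 := by
      have : ((n+1-h : ℕ) : ℝ) = ((n+1 : ℕ) : ℝ) - (h : ℝ) := by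
        rw [Nat.cast_sub (by omega)]
      rw [this]
      push_cast
      ring
    calc x ^ (h-1) * ((h:ℝ) * tildeZeta k (n+1-h) (Function.update s j x) α) +
          x ^ (h-1) * (((n+1-h : ℕ) : ℝ) * tildeZeta k (n+1-h) (Function.update s j x) α)
        = ((h:ℝ) + ((n+1-h : ℕ) : ℝ)) *
            (x ^ (h-1) * tildeZeta k (n+1-h) (Function.update s j x) α) := by ring
      _ = ((n:ℝ) + 1) * (x ^ (h-1) * tildeZeta k (n+1-h) (Function.update s j x) α) := by
          rw [hcast]

end Analytic


/-- `∂_{s_j} ζ̃_n(s,α) = α_j Σ_{h=1}^n s_j^{h-1} ζ̃_{n-h}(s,α)`. -/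
theorem deriv_tildeZeta (k n : ℕ) (s α : Fin k → ℝ) (hα : ∀ i, 0 < α i) (j : Fin k) :
    deriv (fun x => tildeZeta k n (Function.update s j x) α) (s j) =
      α j * ∑ h ∈ Finset.Icc 1 n, s j ^ (h - 1) * tildeZeta k (n - h) s α := by
  have h := (hasDerivAt_tildeZeta k s α j n (s j)).deriv
  rw [h]
  congr 1
  apply Finset.sum_congr rfl
  intro m _
  rw [Function.update_eq_self]
end

section
/- Fix α ∈ ℝ_{>0}^k and s ∈ ℝ^k. As β → 0+, the n-th moment μ'_n(s, βα) = (n!/(β|α|)_n) Z_n(β s·α, ..., β s^{∘n}·α) converges to (Σ_i α_i s_i^n)/|α|, and as β → +∞ it converges to ((s·α)/|α|)^n. -/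
open Filter
open scoped Classical Topology

section Aux
open Function Equiv Finset

lemma poch_eval_prod (N : ℕ) (x : ℝ) :
    (ascPochhammer ℝ N).eval x = ∏ j ∈ Finset.range N, (x + j) := by
  induction N with
  | zero => simp
  | succ N ih => rw [ascPochhammer_succ_right]; simp [ih, Finset.prod_range_succ]

namespace DMA
variable {n : ℕ} (π : Equiv.Perm (Fin n))

lemma mem_periodic (x : Fin n) : x ∈ periodicPts ⇑π :=
  ⟨orderOf π, orderOf_pos π, by
    simp [Function.IsPeriodicPt, Equiv.Perm.iterate_eq_pow, Function.IsFixedPt,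
      pow_orderOf_eq_one]⟩

lemma mp_pos (x : Fin n) : 0 < minimalPeriod ⇑π x :=
  minimalPeriod_pos_of_mem_periodicPts (mem_periodic π x)

noncomputable def orb (x : Fin n) : Finset (Fin n) :=
  univ.filter (fun y => ∃ j, (⇑π)^[j] x = y)

lemma mem_orb {x y : Fin n} : y ∈ orb π x ↔ ∃ j, (⇑π)^[j] x = y := by
  simp [orb]

lemma self_mem_orb (x : Fin n) : x ∈ orb π x := (mem_orb π).2 ⟨0, rfl⟩

lemma iterate_mem_orb (x : Fin n) (j : ℕ) : (⇑π)^[j] x ∈ orb π x := (mem_orb π).2 ⟨j, rfl⟩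

lemma orb_symm {x y : Fin n} (h : y ∈ orb π x) : x ∈ orb π y := by
  obtain ⟨j, rfl⟩ := (mem_orb π).1 h
  refine (mem_orb π).2 ⟨j * orderOf π - j, ?_⟩
  rw [← Function.iterate_add_apply]
  have hj : j * orderOf π - j + j = j * orderOf π := by
    have : j ≤ j * orderOf π := Nat.le_mul_of_pos_right _ (orderOf_pos π)
    omega
  rw [hj, Equiv.Perm.iterate_eq_pow, pow_mul', Equiv.Perm.coe_pow, pow_orderOf_eq_one]
  simp

lemma orb_trans {x y z : Fin n} (hy : y ∈ orb π x) (hz : z ∈ orb π y) : z ∈ orb π x := by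
  obtain ⟨j, rfl⟩ := (mem_orb π).1 hy
  obtain ⟨m, rfl⟩ := (mem_orb π).1 hz
  exact (mem_orb π).2 ⟨m + j, (Function.iterate_add_apply _ _ _ _)⟩

lemma orb_eq {x y : Fin n} (h : y ∈ orb π x) : orb π y = orb π x := by
  ext z
  exact ⟨fun hz => orb_trans π h hz, fun hz => orb_trans π (orb_symm π h) hz⟩

lemma mp_orb {x y : Fin n} (h : y ∈ orb π x) :
    minimalPeriod ⇑π y = minimalPeriod ⇑π x := by
  obtain ⟨j, rfl⟩ := (mem_orb π).1 h
  exact minimalPeriod_apply_iterate (mem_periodic π x) j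

lemma orb_eq_image (x : Fin n) :
    orb π x = (range (minimalPeriod ⇑π x)).image (fun j => (⇑π)^[j] x) := by
  ext y
  simp only [mem_orb, Finset.mem_image, Finset.mem_range]
  constructor
  · rintro ⟨j, rfl⟩
    exact ⟨j % minimalPeriod ⇑π x, Nat.mod_lt _ (mp_pos π x),
      iterate_mod_minimalPeriod_eq⟩
  · rintro ⟨j, _, rfl⟩
    exact ⟨j, rfl⟩

lemma card_orb (x : Fin n) : (orb π x).card = minimalPeriod ⇑π x := by
  rw [orb_eq_image, Finset.card_image_of_injOn, Finset.card_range]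
  intro a ha b hb hab
  exact iterate_injOn_Iio_minimalPeriod (by simpa using ha) (by simpa using hb) hab

lemma mp_le (x : Fin n) : minimalPeriod ⇑π x ≤ n := by
  have := Finset.card_le_card (Finset.subset_univ (orb π x))
  simpa [card_orb] using this

lemma mp_mem_Icc (x : Fin n) : minimalPeriod ⇑π x ∈ Icc 1 n :=
  Finset.mem_Icc.2 ⟨mp_pos π x, mp_le π x⟩

noncomputable def P (i : ℕ) : Finset (Fin n) :=
  univ.filter (fun x => minimalPeriod ⇑π x = i)

lemma orb_subset_P (x : Fin n) : orb π x ⊆ P π (minimalPeriod ⇑π x) := by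
  intro y hy
  simp only [P, Finset.mem_filter, Finset.mem_univ, true_and]
  exact mp_orb π hy

lemma min'_congr {s t : Finset (Fin n)} (hs : s.Nonempty) (ht : t.Nonempty) (h : s = t) :
    s.min' hs = t.min' ht := by subst h; rfl

lemma sum_card_P : ∑ i ∈ Icc 1 n, (P π i).card = n := by
  have h := Finset.card_eq_sum_card_fiberwise
    (f := fun x => minimalPeriod ⇑π x) (t := Icc 1 n) (fun x (_ : x ∈ univ) => mp_mem_Icc π x)
  simpa [P] using h.symm

lemma dvd_card_P (i : ℕ) : i ∣ (P π i).card := by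
  have hrep : ∀ x ∈ P π i, (orb π x).min' ⟨x, self_mem_orb π x⟩ ∈ P π i := by
    intro x hx
    have hmin := Finset.min'_mem (orb π x) ⟨x, self_mem_orb π x⟩
    have h2 := orb_subset_P π x hmin
    simp only [P, Finset.mem_filter, Finset.mem_univ, true_and] at hx h2 ⊢
    exact h2.trans hx
  rw [Finset.card_eq_sum_card_fiberwise hrep]
  refine Finset.dvd_sum ?_
  intro y hy
  rcases Finset.eq_empty_or_nonempty ((P π i).filter
      (fun x => (orb π x).min' ⟨x, self_mem_orb π x⟩ = y)) with he | ⟨x, hx⟩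
  · simp [he]
  · have hx' := hx
    simp only [Finset.mem_filter] at hx'
    obtain ⟨hxP, hxm⟩ := hx'
    have hyx : y ∈ orb π x := hxm ▸ Finset.min'_mem (orb π x) ⟨x, self_mem_orb π x⟩
    have horb : orb π y = orb π x := orb_eq π hyx
    have hfib : (P π i).filter (fun z => (orb π z).min' ⟨z, self_mem_orb π z⟩ = y) = orb π y := by
      ext z
      simp only [Finset.mem_filter]
      constructor
      · rintro ⟨hzP, hzm⟩
        have : y ∈ orb π z := hzm ▸ Finset.min'_mem (orb π z) ⟨z, self_mem_orb π z⟩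
        exact (orb_eq π this) ▸ self_mem_orb π z
      · intro hz
        have horbz : orb π z = orb π y := orb_eq π hz
        constructor
        · have : z ∈ P π (minimalPeriod ⇑π z) := orb_subset_P π z (self_mem_orb π z)
          have hmp : minimalPeriod ⇑π z = i := by
            have := mp_orb π hz
            simp only [P, Finset.mem_filter, Finset.mem_univ, true_and] at hxP
            rw [this, mp_orb π hyx, hxP]
          simp only [P, Finset.mem_filter, Finset.mem_univ, true_and]
          exact hmp
        · exact (min'_congr _ _ (horbz.trans horb)).trans hxm
    rw [hfib, card_orb]
    have : minimalPeriod ⇑π y = i := by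
      simp only [P, Finset.mem_filter, Finset.mem_univ, true_and] at hxP
      rw [mp_orb π hyx, hxP]
    rw [this]





lemma cc_eq (i : ℕ) : cycleCount n π i = (P π i).card / i := rfl

lemma mul_cc (i : ℕ) : i * cycleCount n π i = (P π i).card := by
  rw [cc_eq]; exact Nat.mul_div_cancel' (dvd_card_P π i)

lemma sum_mul_cc : ∑ i ∈ Icc 1 n, i * cycleCount n π i = n := by
  simp_rw [mul_cc]; exact sum_card_P π

noncomputable def Csum : ℕ := ∑ i ∈ Icc 1 n, cycleCount n π i

lemma Csum_le : Csum π ≤ n := by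
  calc Csum π ≤ ∑ i ∈ Icc 1 n, i * cycleCount n π i := by
        refine Finset.sum_le_sum fun i hi => ?_
        have h1 : 1 ≤ i := (Finset.mem_Icc.1 hi).1
        exact Nat.le_mul_of_pos_left _ h1
    _ = n := sum_mul_cc π

lemma one_le_cc (x : Fin n) : 1 ≤ cycleCount n π (Function.minimalPeriod ⇑π x) := by
  rw [cc_eq]
  rw [Nat.one_le_div_iff (mp_pos π x)]
  calc Function.minimalPeriod ⇑π x = (orb π x).card := (card_orb π x).symm
    _ ≤ (P π (Function.minimalPeriod ⇑π x)).card :=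
        Finset.card_le_card (orb_subset_P π x)

lemma one_le_Csum (hn : 0 < n) : 1 ≤ Csum π := by
  have x0 : Fin n := ⟨0, hn⟩
  calc 1 ≤ cycleCount n π (Function.minimalPeriod ⇑π x0) := one_le_cc π x0
    _ ≤ Csum π := Finset.single_le_sum (fun i _ => Nat.zero_le _) (mp_mem_Icc π x0)

lemma cc_one_one : cycleCount n 1 1 = n := by
  have : P (1 : Equiv.Perm (Fin n)) 1 = univ := by
    ext x; simp [P, Function.minimalPeriod_id]
  rw [cc_eq, this]
  simp

lemma cc_one_ne (i : ℕ) (hi : i ≠ 1) : cycleCount n 1 i = 0 := by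
  have : P (1 : Equiv.Perm (Fin n)) i = ∅ := by
    ext x; simp [P, Function.minimalPeriod_id, Ne.symm hi]
  rw [cc_eq, this]
  simp

lemma Csum_one (hn : 0 < n) : Csum (1 : Equiv.Perm (Fin n)) = n := by
  rw [Csum, Finset.sum_eq_single_of_mem 1 (Finset.mem_Icc.2 ⟨le_refl 1, hn⟩)
    (fun i _ hi => cc_one_ne i hi)]
  exact cc_one_one

lemma Csum_eq_n_iff (hn : 0 < n) : Csum π = n ↔ π = 1 := by
  constructor
  · intro h
    have hle : ∀ i ∈ Icc 1 n, cycleCount n π i ≤ i * cycleCount n π i := fun i hi =>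
      Nat.le_mul_of_pos_left _ (Finset.mem_Icc.1 hi).1
    have heq : ∀ i ∈ Icc 1 n, cycleCount n π i = i * cycleCount n π i :=
      (Finset.sum_eq_sum_iff_of_le hle).1 (by rw [sum_mul_cc π]; exact h)
    have hzero : ∀ i ∈ Icc 1 n, 2 ≤ i → cycleCount n π i = 0 := by
      intro i hi h2
      by_contra hne
      have h1 : 1 ≤ cycleCount n π i := Nat.one_le_iff_ne_zero.2 hne
      have := heq i hi
      nlinarith [this, h1, h2]
    have hfix : ∀ x : Fin n, Function.minimalPeriod ⇑π x = 1 := by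
      intro x
      by_contra hne
      have hmem := mp_mem_Icc π x
      have h2 : 2 ≤ Function.minimalPeriod ⇑π x := by
        have := (Finset.mem_Icc.1 hmem).1; omega
      have := hzero _ hmem h2
      have := one_le_cc π x
      omega
    apply Equiv.ext; intro x
    exact Function.minimalPeriod_eq_one_iff_isFixedPt.1 (hfix x)
  · rintro rfl; exact Csum_one hn

lemma P_univ_of (i0 : ℕ) (h : ∀ x : Fin n, Function.minimalPeriod ⇑π x = i0) :
    P π i0 = univ := by
  ext x; simp [P, h x]

lemma P_empty_of (i0 i : ℕ) (h : ∀ x : Fin n, Function.minimalPeriod ⇑π x = i0)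
    (hi : i ≠ i0) : P π i = ∅ := by
  ext x; simp [P, h x, Ne.symm]
  exact fun hc => hi hc.symm

lemma cc_of_all (i0 : ℕ) (h : ∀ x : Fin n, Function.minimalPeriod ⇑π x = i0) :
    cycleCount n π i0 = n / i0 := by
  rw [cc_eq, P_univ_of π i0 h]; simp

lemma cc_of_all_ne (i0 i : ℕ) (h : ∀ x : Fin n, Function.minimalPeriod ⇑π x = i0)
    (hi : i ≠ i0) : cycleCount n π i = 0 := by
  rw [cc_eq, P_empty_of π i0 i h hi]; simp

lemma Csum_eq_one_iff (hn : 0 < n) :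
    Csum π = 1 ↔ ∀ x : Fin n, Function.minimalPeriod ⇑π x = n := by
  constructor
  · intro h
    have x0 : Fin n := ⟨0, hn⟩
    set i0 := Function.minimalPeriod ⇑π x0 with hi0
    have hall : ∀ x : Fin n, Function.minimalPeriod ⇑π x = i0 := by
      intro x
      by_contra hne
      have hxy : Function.minimalPeriod ⇑π x ≠ i0 := hne
      have hsub : {Function.minimalPeriod ⇑π x, i0} ⊆ Icc 1 n := by
        intro i hi
        rcases Finset.mem_insert.1 hi with rfl | hi
        · exact mp_mem_Icc π x
        · rw [Finset.mem_singleton.1 hi]; exact mp_mem_Icc π x0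
      have h2 : 2 ≤ Csum π := by
        calc 2 ≤ cycleCount n π (Function.minimalPeriod ⇑π x) + cycleCount n π i0 := by
              have ha := one_le_cc π x
              have hb := one_le_cc π x0
              rw [← hi0] at hb
              omega
          _ = ∑ i ∈ {Function.minimalPeriod ⇑π x, i0}, cycleCount n π i :=
              (Finset.sum_pair hxy).symm
          _ ≤ Csum π := Finset.sum_le_sum_of_subset hsub
      omega
    have hn_eq : i0 = n := by
      have hP : (P π i0).card = n := by rw [P_univ_of π i0 hall]; simp
      have hdvd : i0 ∣ n := hP ▸ dvd_card_P π i0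
      have h1 : Csum π = n / i0 := by
        rw [Csum, Finset.sum_eq_single_of_mem i0 (mp_mem_Icc π x0)
          (fun i _ hi => cc_of_all_ne π i0 i hall hi)]
        exact cc_of_all π i0 hall
      have hq : n / i0 = 1 := by rw [← h1, h]
      have hc := Nat.div_mul_cancel hdvd
      rw [hq, one_mul] at hc
      exact hc
    intro x; rw [hall x, hn_eq]
  · intro h
    have hnn : n ∈ Icc 1 n := Finset.mem_Icc.2 ⟨hn, le_refl n⟩
    rw [Csum, Finset.sum_eq_single_of_mem n hnn (fun i _ hi => cc_of_all_ne π n i h hi)]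
    rw [cc_of_all π n h, Nat.div_self hn]


variable {m : ℕ}

open Fin.CommRing in
lemma finRotate_iterate (j : ℕ) (y : Fin (m+1)) :
    (⇑(finRotate (m+1)))^[j] y = y + (j : Fin (m+1)) := by
  induction j with
  | zero => simp
  | succ j ih =>
    rw [Function.iterate_succ_apply', ih, finRotate_succ_apply]
    push_cast
    ring

lemma isPeriodicPt_finRotate_iff {j : ℕ} {y : Fin (m+1)} :
    IsPeriodicPt (⇑(finRotate (m+1))) j y ↔ (m+1) ∣ j := by
  rw [IsPeriodicPt, IsFixedPt, finRotate_iterate, ← Fin.natCast_eq_zero]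
  constructor
  · intro h
    have := congrArg (fun z => z - y) h
    simpa [add_comm, add_sub_cancel_right] using this
  · intro h; rw [h, add_zero]

lemma minimalPeriod_finRotate (y : Fin (m+1)) :
    Function.minimalPeriod (⇑(finRotate (m+1))) y = m + 1 := by
  have hper : IsPeriodicPt (⇑(finRotate (m+1))) (m+1) y :=
    isPeriodicPt_finRotate_iff.2 dvd_rfl
  have hpos : 0 < Function.minimalPeriod (⇑(finRotate (m+1))) y :=
    hper.minimalPeriod_pos (Nat.succ_pos m)
  have hle : Function.minimalPeriod (⇑(finRotate (m+1))) y ≤ m + 1 :=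
    hper.minimalPeriod_le (Nat.succ_pos m) 
  have hdvd : (m+1) ∣ Function.minimalPeriod (⇑(finRotate (m+1))) y :=
    isPeriodicPt_finRotate_iff.1 (isPeriodicPt_minimalPeriod _ _)
  have := Nat.le_of_dvd hpos hdvd
  omega


lemma minimalPeriod_conj {N : ℕ} (g r : Equiv.Perm (Fin N)) (x : Fin N) :
    Function.minimalPeriod (⇑(g * r * g⁻¹)) x = Function.minimalPeriod (⇑r) (g⁻¹ x) := by
  rw [Function.minimalPeriod_eq_minimalPeriod_iff]
  intro j
  have hconj : (g * r * g⁻¹) ^ j = g * r ^ j * g⁻¹ := by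
    have := map_pow (MulAut.conj g) r j
    simpa [MulAut.conj_apply] using this
  simp only [Function.IsPeriodicPt, Function.IsFixedPt, Equiv.Perm.iterate_eq_pow, hconj,
    Equiv.Perm.mul_apply]
  constructor
  · intro h
    have := congrArg (⇑g⁻¹) h
    simpa using this
  · intro h
    rw [h]
    simp

noncomputable def TT (m : ℕ) : Finset (Equiv.Perm (Fin (m+1))) :=
  univ.filter (fun π => ∀ x, Function.minimalPeriod (⇑π) x = m+1)

noncomputable def GG (m : ℕ) : Finset (Equiv.Perm (Fin (m+1))) :=
  univ.filter (fun g => g 0 = 0)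

lemma card_GG (m : ℕ) : (GG m).card = m.factorial := by
  have hc : m.factorial = (univ : Finset (Equiv.Perm (Fin m))).card := by
    rw [Finset.card_univ, Fintype.card_perm, Fintype.card_fin]
  rw [hc]
  refine Finset.card_bij' (fun g _ => (Equiv.Perm.decomposeFin g).2)
    (fun σ _ => Equiv.Perm.decomposeFin.symm (0, σ)) (fun _ _ => Finset.mem_univ _)
    (fun σ _ => by simp [GG, Equiv.Perm.decomposeFin_symm_apply_zero]) ?_ ?_
  · intro g hg
    have h0 : (Equiv.Perm.decomposeFin g).1 = 0 := by
      have := Equiv.Perm.decomposeFin_symm_apply_zero (Equiv.Perm.decomposeFin g).1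
        (Equiv.Perm.decomposeFin g).2
      rw [Prod.mk.eta, Equiv.symm_apply_apply] at this
      simp only [GG, Finset.mem_filter] at hg
      rw [hg.2] at this
      exact this.symm
    calc Equiv.Perm.decomposeFin.symm (0, (Equiv.Perm.decomposeFin g).2)
        = Equiv.Perm.decomposeFin.symm ((Equiv.Perm.decomposeFin g).1,
            (Equiv.Perm.decomposeFin g).2) := by rw [h0]
      _ = g := by rw [Prod.mk.eta, Equiv.symm_apply_apply]
  · intro σ _
    simp

lemma card_TT (m : ℕ) : (TT m).card = m.factorial := by
  rw [← card_GG m]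
  have hmem : ∀ π ∈ TT m, ∀ x, Function.minimalPeriod (⇑π) x = m+1 := by
    intro π hπ; simpa [TT] using hπ
  have hinj : ∀ π ∈ TT m, Function.Injective (fun j : Fin (m+1) => (⇑π)^[j.val] 0) := by
    intro π hπ a b hab
    have h0 := hmem π hπ 0
    have := Function.iterate_injOn_Iio_minimalPeriod (f := ⇑π) (x := 0)
      (by simp [h0, Set.mem_Iio, a.isLt]) (by simp [h0, Set.mem_Iio, b.isLt]) hab
    exact Fin.val_injective this
  refine Finset.card_bij'
    (fun π hπ => Equiv.ofBijective _ (Finite.injective_iff_bijective.1 (hinj π hπ)))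
    (fun g _ => g * finRotate (m+1) * g⁻¹) ?_ ?_ ?_ ?_
  · intro π hπ
    simp only [GG, Finset.mem_filter, Finset.mem_univ, true_and]
    show (⇑π)^[(0 : Fin (m+1)).val] 0 = 0
    simp
  · intro g hg
    simp only [TT, Finset.mem_filter, Finset.mem_univ, true_and]
    intro x
    rw [minimalPeriod_conj, minimalPeriod_finRotate]
  · -- left inverse : Ψ (Φ π) = π
    intro π hπ
    set g := Equiv.ofBijective _ (Finite.injective_iff_bijective.1 (hinj π hπ)) with hg
    have key : g * finRotate (m+1) = π * g := by
      apply Equiv.ext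
      intro j
      show (⇑π)^[((finRotate (m+1)) j).val] 0 = π ((⇑π)^[j.val] 0)
      rw [finRotate_succ_apply]
      have hval : (j + 1).val = (j.val + 1) % (m + 1) := by
        rw [Fin.add_def]; simp
      have h0 := hmem π hπ 0
      have hmod := Function.iterate_mod_minimalPeriod_eq (f := ⇑π) (x := 0) (n := j.val + 1)
      rw [h0] at hmod
      rw [hval, hmod, ← Function.iterate_succ_apply' (⇑π) j.val 0]
    calc g * finRotate (m+1) * g⁻¹ = π * g * g⁻¹ := by rw [key]
      _ = π := by group
  · -- right inverse : Φ (Ψ g) = g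
    intro g hg
    apply Equiv.ext
    intro j
    show (⇑(g * finRotate (m+1) * g⁻¹))^[j.val] 0 = g j
    have hginv : g⁻¹ 0 = 0 := by
      simp only [GG, Finset.mem_filter, Finset.mem_univ, true_and] at hg
      exact Equiv.injective g (by simp [hg])
    have hconj : (g * finRotate (m+1) * g⁻¹) ^ (j.val) = g * (finRotate (m+1)) ^ j.val * g⁻¹ := by
      have := map_pow (MulAut.conj g) (finRotate (m+1)) j.val
      simpa [MulAut.conj_apply] using this
    rw [Equiv.Perm.iterate_eq_pow, hconj]
    simp only [Equiv.Perm.mul_apply, hginv]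
    rw [← Equiv.Perm.iterate_eq_pow, finRotate_iterate, zero_add, Fin.cast_val_eq_self]

end DMA

end Aux

open Finset in
/-- The `n`-th moment of `s·Y`, `Y ~ Dir(βα)`, i.e.
`μ'_n(s,βα) = (n!/(β|α|)_n) Z_n(β s·α, ..., β s^{∘n}·α)`, converges to
`(Σ_i α_i s_i^n)/|α|` as `β → 0+` and to `((s·α)/|α|)^n` as `β → +∞`. -/
theorem dirichlet_moment_asymptotics (k n : ℕ) (hk : 0 < k) (α s : Fin k → ℝ)
    (hα : ∀ i, 0 < α i) :
    Tendsto
        (fun β : ℝ => (n.factorial : ℝ) / (ascPochhammer ℝ n).eval (β * ∑ i, α i) *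
          cycleIndex n fun j => ∑ i, β * α i * s i ^ j)
        (nhdsWithin 0 (Set.Ioi 0)) (nhds ((∑ i, α i * s i ^ n) / ∑ i, α i))
    ∧ Tendsto
        (fun β : ℝ => (n.factorial : ℝ) / (ascPochhammer ℝ n).eval (β * ∑ i, α i) *
          cycleIndex n fun j => ∑ i, β * α i * s i ^ j)
        atTop (nhds (((∑ i, s i * α i) / ∑ i, α i) ^ n)) := by
  have hkne : (Finset.univ : Finset (Fin k)).Nonempty := ⟨⟨0, hk⟩, Finset.mem_univ _⟩
  set A : ℝ := ∑ i, α i with hA_def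
  have hA : 0 < A := Finset.sum_pos (fun i _ => hα i) hkne
  set c : ℕ → ℝ := fun j => ∑ i, α i * s i ^ j with hc_def
  rcases Nat.eq_zero_or_pos n with hn0 | hn
  · -- n = 0
    subst hn0
    have hFconst : (fun β : ℝ => (Nat.factorial 0 : ℝ) /
        (ascPochhammer ℝ 0).eval (β * A) *
        cycleIndex 0 fun j => ∑ i, β * α i * s i ^ j) = fun _ => 1 := by
      funext β
      rw [ascPochhammer_zero, Polynomial.eval_one, Nat.factorial_zero, Nat.cast_one, div_one,
        one_mul, cycleIndex]
      have hIcc : (Finset.Icc 1 0 : Finset ℕ) = ∅ := by decide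
      rw [Finset.sum_congr rfl fun π _ => by rw [hIcc, Finset.prod_empty]]
      rw [Finset.sum_const, Finset.card_univ]
      have : Fintype.card (Equiv.Perm (Fin 0)) = 1 := by
        rw [Fintype.card_perm]; simp
      rw [this, Nat.factorial_zero]
      norm_num
    constructor
    · have h1 : (∑ i, α i * s i ^ 0) / A = 1 := by
        simp only [pow_zero, mul_one, ← hA_def]
        exact div_self hA.ne'
      rw [hFconst, h1]
      exact tendsto_const_nhds
    · rw [hFconst, pow_zero]
      exact tendsto_const_nhds
  -- n ≥ 1
  obtain ⟨m, rfl⟩ : ∃ m, n = m + 1 := ⟨n - 1, by omega⟩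
  set n := m + 1 with hn_def
  set w : Equiv.Perm (Fin n) → ℝ := fun π => ∏ i ∈ Icc 1 n, c i ^ cycleCount n π i with hw_def
  set F : ℝ → ℝ := fun β => (n.factorial : ℝ) / (ascPochhammer ℝ n).eval (β * A) *
      cycleIndex n fun j => ∑ i, β * α i * s i ^ j with hF_def
  have hfac : (n.factorial : ℝ) ≠ 0 := Nat.cast_ne_zero.2 n.factorial_ne_zero
  have hmfac : ((m.factorial : ℝ)) ≠ 0 := Nat.cast_ne_zero.2 m.factorial_ne_zero
  -- Step A : rewrite F
  have stepA : ∀ β : ℝ,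
      F β = (∑ π : Equiv.Perm (Fin n), β ^ DMA.Csum π * w π) /
        (ascPochhammer ℝ n).eval (β * A) := by
    intro β
    have harg : (fun j => ∑ i, β * α i * s i ^ j) = fun j => β * c j := by
      funext j
      rw [hc_def, Finset.mul_sum]
      exact Finset.sum_congr rfl fun i _ => (mul_assoc _ _ _)
    have hprod : ∀ π : Equiv.Perm (Fin n),
        (∏ i ∈ Icc 1 n, (β * c i) ^ cycleCount n π i) = β ^ DMA.Csum π * w π := by
      intro π
      simp only [mul_pow, Finset.prod_mul_distrib, hw_def]
      rw [Finset.prod_pow_eq_pow_sum]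
      rfl
    simp only [hF_def]
    simp only [harg]
    simp only [cycleIndex]
    simp only [hprod]
    rw [div_mul_eq_mul_div, mul_comm ((n.factorial : ℝ)) _, mul_assoc,
      mul_comm (∑ x : Equiv.Perm (Fin n), β ^ DMA.Csum x * w x) ((n.factorial : ℝ)),
      ← mul_assoc, inv_mul_cancel₀ hfac, one_mul]
  -- w on full cycles and on the identity, and counting
  have hwTT : ∀ π ∈ DMA.TT m, w π = c n := by
    intro π hπ
    have hall : ∀ x, Function.minimalPeriod (⇑π) x = n := by
      simpa [DMA.TT] using hπ
    rw [hw_def]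
    refine Finset.prod_eq_single_of_mem n (Finset.mem_Icc.2 ⟨hn, le_refl n⟩) ?_ |>.trans ?_
    · intro i _ hi
      rw [DMA.cc_of_all_ne π n i hall hi, pow_zero]
    · rw [DMA.cc_of_all π n hall, Nat.div_self hn, pow_one]
  have hCsum_one : (Finset.univ.filter fun π : Equiv.Perm (Fin n) => DMA.Csum π = 1) =
      DMA.TT m := by
    rw [DMA.TT]
    exact Finset.filter_congr fun π _ => by
      simpa using DMA.Csum_eq_one_iff π hn
  have hCsum_n : (Finset.univ.filter fun π : Equiv.Perm (Fin n) => DMA.Csum π = n) =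
      {(1 : Equiv.Perm (Fin n))} := by
    have h1 : ∀ π : Equiv.Perm (Fin n), DMA.Csum π = n ↔ π = 1 := fun π =>
      DMA.Csum_eq_n_iff π hn
    rw [Finset.filter_congr fun π _ => by simpa using h1 π]
    exact Finset.filter_eq' _ _ |>.trans (by simp)
  have hw1 : w 1 = c 1 ^ n := by
    rw [hw_def]
    refine Finset.prod_eq_single_of_mem 1 (Finset.mem_Icc.2 ⟨le_refl 1, hn⟩) ?_ |>.trans ?_
    · intro i _ hi
      rw [DMA.cc_one_ne i hi, pow_zero]
    · rw [DMA.cc_one_one]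
  constructor
  · -- β → 0+
    set N' : ℝ → ℝ := fun β => ∑ π : Equiv.Perm (Fin n), β ^ (DMA.Csum π - 1) * w π with hN'
    set D' : ℝ → ℝ := fun β => ∏ j ∈ Finset.range m, (β * A + (j + 1)) with hD'
    have heq : ∀ β ∈ Set.Ioi (0:ℝ), F β = N' β / (A * D' β) := by
      intro β hβ
      have hβ0 : (β:ℝ) ≠ 0 := (Set.mem_Ioi.1 hβ).ne'
      rw [stepA, poch_eval_prod]
      have hQ : (∏ j ∈ Finset.range n, (β * A + (j:ℝ))) = β * (A * D' β) := by
        rw [Finset.prod_range_succ']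
        push_cast
        rw [add_zero]
        simp only [hD']
        ring
      have hN : (∑ π : Equiv.Perm (Fin n), β ^ DMA.Csum π * w π) = β * N' β := by
        simp only [hN']
        rw [Finset.mul_sum]
        refine Finset.sum_congr rfl fun π _ => ?_
        rw [← mul_assoc, ← pow_succ']
        congr 2
        have := DMA.one_le_Csum π hn
        omega
      rw [hQ, hN, mul_div_mul_left _ _ hβ0]
    have hcontN : Continuous N' := by
      apply continuous_finset_sum
      intro π _
      exact (continuous_pow _).mul continuous_const
    have hcontD : Continuous D' := by
      apply continuous_finset_prod
      intro j _
      exact (continuous_id.mul continuous_const).add continuous_const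
    have hD'0 : D' 0 = (m.factorial : ℝ) := by
      simp only [hD']
      simp only [zero_mul, zero_add]
      rw [← Finset.prod_range_add_one_eq_factorial m]
      push_cast
      rfl
    have hN'0 : N' 0 = (m.factorial : ℝ) * c n := by
      simp only [hN']
      have : ∀ π : Equiv.Perm (Fin n),
          (0:ℝ) ^ (DMA.Csum π - 1) * w π = if DMA.Csum π = 1 then w π else 0 := by
        intro π
        have h1 := DMA.one_le_Csum π hn
        by_cases hC : DMA.Csum π = 1
        · rw [if_pos hC, hC]
          simp
        · rw [if_neg hC, zero_pow (by omega), zero_mul]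
      rw [Finset.sum_congr rfl fun π _ => this π, ← Finset.sum_filter, hCsum_one,
        Finset.sum_congr rfl hwTT, Finset.sum_const, DMA.card_TT, nsmul_eq_mul]
    have hne : A * D' 0 ≠ 0 := by
      rw [hD'0]; exact mul_ne_zero hA.ne' hmfac
    have htend : Tendsto (fun β => N' β / (A * D' β)) (nhdsWithin 0 (Set.Ioi 0))
        (nhds (N' 0 / (A * D' 0))) :=
      (((hcontN.tendsto 0).div ((continuous_const.mul hcontD).tendsto 0) hne).mono_left
        nhdsWithin_le_nhds)
    have hval : N' 0 / (A * D' 0) = (∑ i, α i * s i ^ n) / A := by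
      rw [hN'0, hD'0, mul_comm A, mul_div_mul_left _ _ hmfac]
    rw [← hval]
    refine htend.congr' ?_
    filter_upwards [eventually_mem_nhdsWithin] with β hβ
    exact (heq β hβ).symm
  · -- β → ∞
    set P1 : ℝ → ℝ := fun x => ∑ π : Equiv.Perm (Fin n), x ^ (n - DMA.Csum π) * w π with hP1
    set P2 : ℝ → ℝ := fun x => ∏ j ∈ Finset.range n, (A + j * x) with hP2
    have heq : ∀ᶠ β in atTop, F β = P1 β⁻¹ / P2 β⁻¹ := by
      filter_upwards [eventually_gt_atTop (0:ℝ)] with β hβ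
      have hβ0 : β ≠ 0 := hβ.ne'
      rw [stepA, poch_eval_prod]
      have hQ : (∏ j ∈ Finset.range n, (β * A + (j:ℝ))) = β ^ n * P2 β⁻¹ := by
        have hterm : ∀ j ∈ Finset.range n, (β * A + (j:ℝ)) = β * (A + j * β⁻¹) := by
          intro j _
          rw [mul_add, mul_comm β ((j:ℝ) * β⁻¹), mul_assoc, inv_mul_cancel₀ hβ0, mul_one]
        rw [Finset.prod_congr rfl hterm, Finset.prod_mul_distrib, Finset.prod_const,
          Finset.card_range]
      have hN : (∑ π : Equiv.Perm (Fin n), β ^ DMA.Csum π * w π) = β ^ n * P1 β⁻¹ := by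
        simp only [hP1]
        rw [Finset.mul_sum]
        refine Finset.sum_congr rfl fun π _ => ?_
        have hC := DMA.Csum_le π
        have hpow : β ^ n * β⁻¹ ^ (n - DMA.Csum π) = β ^ DMA.Csum π := by
          rw [inv_pow, ← pow_sub₀ β hβ0 (Nat.sub_le n _)]
          congr 1
          omega
        rw [← mul_assoc, hpow]
      rw [hQ, hN, mul_div_mul_left _ _ (pow_ne_zero n hβ0)]
    have hcont1 : Continuous P1 := by
      apply continuous_finset_sum
      intro π _
      exact (continuous_pow _).mul continuous_const
    have hcont2 : Continuous P2 := by
      apply continuous_finset_prod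
      intro j _
      exact continuous_const.add (continuous_const.mul continuous_id)
    have hP20 : P2 0 = A ^ n := by
      simp only [hP2]
      simp [Finset.prod_const, Finset.card_range]
    have hP10 : P1 0 = c 1 ^ n := by
      simp only [hP1]
      have : ∀ π : Equiv.Perm (Fin n),
          (0:ℝ) ^ (n - DMA.Csum π) * w π = if DMA.Csum π = n then w π else 0 := by
        intro π
        have hC := DMA.Csum_le π
        by_cases hCn : DMA.Csum π = n
        · rw [if_pos hCn, hCn, Nat.sub_self, pow_zero, one_mul]
        · rw [if_neg hCn, zero_pow (by omega), zero_mul]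
      rw [Finset.sum_congr rfl fun π _ => this π, ← Finset.sum_filter, hCsum_n,
        Finset.sum_singleton, hw1]
    have hne : P2 0 ≠ 0 := by rw [hP20]; exact pow_ne_zero _ hA.ne'
    have htend : Tendsto (fun β : ℝ => P1 β⁻¹ / P2 β⁻¹) atTop (nhds (P1 0 / P2 0)) :=
      ((hcont1.tendsto 0).div (hcont2.tendsto 0) hne).comp tendsto_inv_atTop_zero
    have hval : P1 0 / P2 0 = ((∑ i, s i * α i) / A) ^ n := by
      rw [hP10, hP20, ← div_pow]
      congr 2
      rw [hc_def]
      simp [pow_one, mul_comm]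
    rw [← hval]
    exact htend.congr' (heq.mono fun β h => h.symm)
end

section
/- Pólya's enumeration theorem: for a permutation group G acting on [n] and k colors, the multivariate generating function Σ a_{h_1,...,h_k} t_1^{h_1}···t_k^{h_k}, where a_{h_1,...,h_k} is the number of G-orbits of colorings [n] → [k] with exactly h_i occurrences of color i, equals Z^G(p_1(t), p_2(t), ..., p_n(t)), where p_j(t) = t_1^j + ... + t_k^j and Z^G is the cycle index of G. -/
open scoped Classical

attribute [local instance] arrowAction

section PolyaAux

variable {n k : ℕ}

noncomputable def wt (t : Fin k → ℝ) (f : Fin n → Fin k) : ℝ :=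
  ∏ j : Fin k, t j ^ (Finset.univ.filter fun i => f i = j).card

lemma wt_eq_prod (t : Fin k → ℝ) (f : Fin n → Fin k) :
    wt t f = ∏ x : Fin n, t (f x) := by
  rw [wt, ← Finset.prod_fiberwise Finset.univ f (fun x => t (f x))]
  refine Finset.prod_congr rfl fun j _ => ?_
  rw [Finset.prod_congr rfl (fun x hx => by rw [(Finset.mem_filter.1 hx).2]),
    Finset.prod_const]

def mkc (π : Equiv.Perm (Fin n)) (x : Fin n) : Quotient (Equiv.Perm.SameCycle.setoid π) :=
  Quotient.mk _ x

lemma mkc_eq_iff {π : Equiv.Perm (Fin n)} {x y : Fin n} :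
    mkc π x = mkc π y ↔ π.SameCycle x y := ⟨Quotient.exact, fun h => Quotient.sound h⟩

lemma mkc_out {π : Equiv.Perm (Fin n)} (c : Quotient (Equiv.Perm.SameCycle.setoid π)) :
    mkc π c.out = c := Quotient.out_eq c

lemma sameCycle_out_self (π : Equiv.Perm (Fin n)) (x : Fin n) :
    π.SameCycle (mkc π x).out x := Quotient.exact (mkc_out _)

noncomputable def classSize (π : Equiv.Perm (Fin n))
    (c : Quotient (Equiv.Perm.SameCycle.setoid π)) : ℕ :=
  (Finset.univ.filter fun x : Fin n => mkc π x = c).card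

lemma mem_periodicPts' (π : Equiv.Perm (Fin n)) (x : Fin n) :
    x ∈ Function.periodicPts ⇑π :=
  ⟨orderOf π, orderOf_pos π, by
    simp [Function.IsPeriodicPt, Function.IsFixedPt, ← Equiv.Perm.coe_pow,
      pow_orderOf_eq_one]⟩

lemma classSize_mk (π : Equiv.Perm (Fin n)) (x : Fin n) :
    classSize π (mkc π x) = Function.minimalPeriod (⇑π) x := by
  have hmem : ∀ y, (mkc π y = mkc π x) ↔ y ∈ MulAction.orbit (Subgroup.zpowers π) x := by
    intro y
    rw [mkc_eq_iff]
    constructor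
    · rintro h
      obtain ⟨i, hi⟩ := h.symm
      exact ⟨⟨π ^ i, Subgroup.mem_zpowers_iff.2 ⟨i, rfl⟩⟩, hi⟩
    · rintro ⟨⟨g, hg⟩, rfl⟩
      obtain ⟨i, rfl⟩ := Subgroup.mem_zpowers_iff.1 hg
      exact Equiv.Perm.SameCycle.symm ⟨i, rfl⟩
  have hcard : classSize π (mkc π x)
      = Fintype.card (MulAction.orbit (Subgroup.zpowers π) x) := by
    rw [classSize, ← Fintype.card_subtype,
      Fintype.card_congr (Equiv.subtypeEquivRight hmem)]
  have hmp : Function.minimalPeriod (π • ·) x = Function.minimalPeriod ⇑π x := by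
    simp [Equiv.Perm.smul_def]
  have h0 : 0 < Function.minimalPeriod ⇑π x :=
    Function.minimalPeriod_pos_of_mem_periodicPts (mem_periodicPts' π x)
  have : NeZero (Function.minimalPeriod (π • ·) x) := ⟨by omega⟩
  rw [hcard, Fintype.card_congr (MulAction.orbitZPowersEquiv π x), ZMod.card, hmp]

lemma const_on_cycles (π : Equiv.Perm (Fin n)) (f : Fin n → Fin k)
    (h : ∀ x, f (π x) = f x) {x y : Fin n} (hxy : π.SameCycle x y) : f x = f y := by
  obtain ⟨i, -, rfl⟩ := hxy.exists_pow_eq'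
  have : ∀ m : ℕ, f ((π ^ m) x) = f x := by
    intro m
    induction m with
    | zero => simp
    | succ m ih => rw [pow_succ', Equiv.Perm.mul_apply, h, ih]
  exact (this i).symm

lemma prod_comp_mkc (π : Equiv.Perm (Fin n))
    (u : Quotient (Equiv.Perm.SameCycle.setoid π) → ℝ) :
    ∏ x : Fin n, u (mkc π x) = ∏ c, u c ^ classSize π c := by
  rw [← Finset.prod_fiberwise Finset.univ (mkc π) (fun x => u (mkc π x))]
  refine Finset.prod_congr rfl fun c _ => ?_
  rw [Finset.prod_congr rfl (fun x hx => by rw [(Finset.mem_filter.1 hx).2]),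
    Finset.prod_const, classSize]

lemma classSize_pos (π : Equiv.Perm (Fin n))
    (c : Quotient (Equiv.Perm.SameCycle.setoid π)) : 0 < classSize π c :=
  Finset.card_pos.2 ⟨c.out, Finset.mem_filter.2 ⟨Finset.mem_univ _, mkc_out c⟩⟩

lemma classSize_le (π : Equiv.Perm (Fin n))
    (c : Quotient (Equiv.Perm.SameCycle.setoid π)) : classSize π c ≤ n := by
  simpa [classSize] using Finset.card_filter_le Finset.univ (fun x : Fin n => mkc π x = c)

lemma card_classes_eq (π : Equiv.Perm (Fin n)) {i : ℕ} (hi : 0 < i) :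
    (Finset.univ.filter fun c : Quotient (Equiv.Perm.SameCycle.setoid π) =>
      classSize π c = i).card = cycleCount n π i := by
  set t := Finset.univ.filter fun c : Quotient (Equiv.Perm.SameCycle.setoid π) =>
      classSize π c = i with ht
  have h1 : (Finset.univ.filter fun x : Fin n => Function.minimalPeriod (⇑π) x = i)
      = Finset.univ.filter fun x : Fin n => classSize π (mkc π x) = i :=
    Finset.filter_congr fun x _ => by rw [classSize_mk]
  have h2 : (Finset.univ.filter fun x : Fin n => classSize π (mkc π x) = i).card
      = ∑ c ∈ t, (((Finset.univ.filter fun x : Fin n => classSize π (mkc π x) = i)).filter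
          fun x => mkc π x = c).card := by
    refine Finset.card_eq_sum_card_fiberwise fun x hx => ?_
    exact Finset.mem_filter.2 ⟨Finset.mem_univ _, (Finset.mem_filter.1 hx).2⟩
  have h3 : ∀ c ∈ t, (((Finset.univ.filter fun x : Fin n =>
      classSize π (mkc π x) = i)).filter fun x => mkc π x = c).card = i := by
    intro c hc
    have hcs : classSize π c = i := (Finset.mem_filter.1 hc).2
    have he : ((Finset.univ.filter fun x : Fin n => classSize π (mkc π x) = i)).filter
        (fun x => mkc π x = c) = Finset.univ.filter fun x => mkc π x = c := by
      ext x
      simp only [Finset.mem_filter, Finset.mem_univ, true_and]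
      exact ⟨fun h => h.2, fun h => ⟨by rw [h, hcs], h⟩⟩
    rw [he, ← classSize, hcs]
  rw [cycleCount, h1, h2, Finset.sum_congr rfl h3, Finset.sum_const, smul_eq_mul,
    Nat.mul_div_cancel _ hi]

lemma stepC (π : Equiv.Perm (Fin n)) (t : Fin k → ℝ) :
    ∑ f ∈ Finset.univ.filter (fun f : Fin n → Fin k => ∀ x, f (π x) = f x), wt t f
      = ∏ i ∈ Finset.Icc 1 n, (∑ j : Fin k, t j ^ i) ^ cycleCount n π i := by
  have e1 : ∑ f ∈ Finset.univ.filter (fun f : Fin n → Fin k => ∀ x, f (π x) = f x), wt t f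
      = ∑ g : Quotient (Equiv.Perm.SameCycle.setoid π) → Fin k,
          ∏ c, t (g c) ^ classSize π c := by
    refine Finset.sum_nbij' (i := fun f c => f c.out)
      (j := fun g x => g (mkc π x)) (fun f hf => Finset.mem_univ _)
      (fun g hg => ?_) (fun f hf => ?_) (fun g hg => ?_) (fun f hf => ?_)
    · refine Finset.mem_filter.2 ⟨Finset.mem_univ _, fun x => ?_⟩
      exact congrArg g <| mkc_eq_iff.2 (Equiv.Perm.sameCycle_apply_left.2 (Equiv.Perm.SameCycle.refl π x))
    · funext x
      exact const_on_cycles π f (Finset.mem_filter.1 hf).2 (sameCycle_out_self π x)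
    · funext c
      simp only [mkc_out]
    · have hconst : ∀ x, f (mkc π x).out = f x :=
        fun x => const_on_cycles π f (Finset.mem_filter.1 hf).2 (sameCycle_out_self π x)
      rw [wt_eq_prod, ← prod_comp_mkc π (fun c => t (f c.out))]
      exact Finset.prod_congr rfl fun x _ => by rw [hconst]
  rw [e1, ← Fintype.prod_sum (fun c (j : Fin k) => t j ^ classSize π c),
    ← Finset.prod_fiberwise_of_maps_to (g := classSize π) (t := Finset.Icc 1 n)
      (fun c _ => Finset.mem_Icc.2 ⟨classSize_pos π c, classSize_le π c⟩)
      (fun c => ∑ j : Fin k, t j ^ classSize π c)]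
  refine Finset.prod_congr rfl fun i hi => ?_
  rw [Finset.prod_congr rfl (fun c hc => by rw [(Finset.mem_filter.1 hc).2]),
    Finset.prod_const, card_classes_eq π (Finset.mem_Icc.1 hi).1]

end PolyaAux

attribute [local instance] arrowAction

section Burnside

variable {n k : ℕ}

lemma wt_smul (G : Subgroup (Equiv.Perm (Fin n))) (t : Fin k → ℝ) (σ : G)
    (f : Fin n → Fin k) : wt t (σ • f) = wt t f := by
  rw [wt_eq_prod, wt_eq_prod]
  have h : ∀ x : Fin n, (σ • f) x = f (((σ : Equiv.Perm (Fin n)))⁻¹ x) := fun x => rfl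
  rw [Finset.prod_congr rfl fun x _ => by rw [h]]
  exact Equiv.prod_comp ((σ : Equiv.Perm (Fin n))⁻¹) (fun x => t (f x))

lemma burnside (G : Subgroup (Equiv.Perm (Fin n))) (t : Fin k → ℝ) :
    ∑ π : G, ∑ f ∈ Finset.univ.filter (fun f : Fin n → Fin k => π • f = f), wt t f
      = (Nat.card G : ℝ) *
          ∑ F : Quotient (MulAction.orbitRel G (Fin n → Fin k)), wt t F.out := by
  calc
    ∑ π : G, ∑ f ∈ Finset.univ.filter (fun f : Fin n → Fin k => π • f = f), wt t f
        = ∑ π : G, ∑ f : Fin n → Fin k, if π • f = f then wt t f else 0 :=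
      Finset.sum_congr rfl fun π _ => Finset.sum_filter _ _
    _ = ∑ f : Fin n → Fin k, ∑ π : G, if π • f = f then wt t f else 0 :=
      Finset.sum_comm
    _ = ∑ f : Fin n → Fin k,
          (Fintype.card (MulAction.stabilizer G f) : ℝ) * wt t f := by
      refine Finset.sum_congr rfl fun f _ => ?_
      rw [← Finset.sum_filter, Finset.sum_const, nsmul_eq_mul]
      congr 2
      rw [Fintype.card_subtype]
      rfl
    _ = ∑ F : Quotient (MulAction.orbitRel G (Fin n → Fin k)),
          ∑ f ∈ Finset.univ.filter
            (fun f : Fin n → Fin k => Quotient.mk _ f = F),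
            (Fintype.card (MulAction.stabilizer G f) : ℝ) * wt t f :=
      (Finset.sum_fiberwise Finset.univ _ _).symm
    _ = (Nat.card G : ℝ) *
          ∑ F : Quotient (MulAction.orbitRel G (Fin n → Fin k)), wt t F.out := by
      rw [Finset.mul_sum]
      refine Finset.sum_congr rfl fun F _ => ?_
      have hrel : ∀ f : Fin n → Fin k, Quotient.mk (MulAction.orbitRel G (Fin n → Fin k)) f = F
          → f ∈ MulAction.orbit G F.out := by
        intro f hf
        exact Quotient.exact (hf.trans (Quotient.out_eq F).symm)
      have hinner : ∀ f ∈ Finset.univ.filter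
          (fun f : Fin n → Fin k => Quotient.mk _ f = F),
          (Fintype.card (MulAction.stabilizer G f) : ℝ) * wt t f
            = (Fintype.card (MulAction.stabilizer G F.out) : ℝ) * wt t F.out := by
        intro f hf
        have hm := hrel f (Finset.mem_filter.1 hf).2
        obtain ⟨g, hg⟩ := MulAction.mem_orbit_iff.1 hm
        have hw : wt t f = wt t F.out := by rw [← hg, wt_smul]
        have hs : Fintype.card (MulAction.stabilizer G f)
            = Fintype.card (MulAction.stabilizer G F.out) :=
          Fintype.card_congr
            (MulAction.stabilizerEquivStabilizerOfOrbitRel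
              (Quotient.exact ((Quotient.out_eq F).symm ▸ (Finset.mem_filter.1 hf).2))).toEquiv
        rw [hw, hs]
      rw [Finset.sum_congr rfl hinner, Finset.sum_const, nsmul_eq_mul]
      have hcardfib : (Finset.univ.filter
          (fun f : Fin n → Fin k => Quotient.mk (MulAction.orbitRel G (Fin n → Fin k)) f = F)).card
          = Fintype.card (MulAction.orbit G F.out) := by
        rw [← Fintype.card_subtype]
        refine Fintype.card_congr (Equiv.subtypeEquivRight fun f => ?_)
        constructor
        · exact hrel f
        · intro hf
          exact (Quotient.sound hf).trans (Quotient.out_eq F)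
      have horb : (Fintype.card (MulAction.orbit G F.out)
            * Fintype.card (MulAction.stabilizer G F.out) : ℕ)
          = Nat.card G := by
        rw [MulAction.card_orbit_mul_card_stabilizer_eq_card_group, Nat.card_eq_fintype_card]
      rw [hcardfib, ← mul_assoc]
      norm_cast
      rw [horb]

end Burnside


/-- Pólya's enumeration theorem: summing, over the `G`-orbits of colorings
`[n] → [k]`, the monomial `t₁^{h₁}···t_k^{h_k}` recording the color multiplicities
of (a representative of) the orbit, gives the cycle index
`Z^G(p₁(t), ..., p_n(t))`, where `p_j(t) = t₁^j + ... + t_k^j`. -/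
theorem polya_enumeration (n k : ℕ) (G : Subgroup (Equiv.Perm (Fin n))) (t : Fin k → ℝ) :
    ∑ F : Quotient (MulAction.orbitRel G (Fin n → Fin k)),
        ∏ j : Fin k, t j ^ (Finset.univ.filter fun i => F.out i = j).card
      = (Nat.card G : ℝ)⁻¹ *
          ∑ π : G, ∏ i ∈ Finset.Icc 1 n,
            (∑ j : Fin k, t j ^ i) ^ cycleCount n (π : Equiv.Perm (Fin n)) i := by
  have hfix : ∀ π : G, (Finset.univ.filter fun f : Fin n → Fin k => π • f = f)
      = Finset.univ.filter fun f : Fin n → Fin k =>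
          ∀ x, f ((π : Equiv.Perm (Fin n)) x) = f x := by
    intro π
    refine Finset.filter_congr fun f _ => ?_
    constructor
    · intro h x
      have hx := congrFun h ((π : Equiv.Perm (Fin n)) x)
      have : (π • f) ((π : Equiv.Perm (Fin n)) x)
          = f (((π : Equiv.Perm (Fin n)))⁻¹ ((π : Equiv.Perm (Fin n)) x)) := rfl
      rw [this, Equiv.Perm.coe_inv, Equiv.symm_apply_apply] at hx
      exact hx.symm
    · intro h
      funext y
      have : (π • f) y = f (((π : Equiv.Perm (Fin n)))⁻¹ y) := rfl
      rw [this]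
      have := h (((π : Equiv.Perm (Fin n)))⁻¹ y)
      rw [Equiv.Perm.coe_inv, Equiv.apply_symm_apply] at this
      exact this.symm
  have hsum : ∑ π : G, ∏ i ∈ Finset.Icc 1 n,
      (∑ j : Fin k, t j ^ i) ^ cycleCount n (π : Equiv.Perm (Fin n)) i
      = (Nat.card G : ℝ) *
          ∑ F : Quotient (MulAction.orbitRel G (Fin n → Fin k)), wt t F.out := by
    rw [← burnside G t]
    refine Finset.sum_congr rfl fun π _ => ?_
    rw [hfix π, stepC]
  have hG : (Nat.card G : ℝ) ≠ 0 := by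
    have := Nat.card_pos (α := G)
    positivity
  show ∑ F : Quotient (MulAction.orbitRel G (Fin n → Fin k)), wt t F.out = _
  rw [hsum, inv_mul_cancel_left₀ hG]
end
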